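/- arXiv:2302.08939 — 8 statements merged into one kernel-verified Lean document; each statement's English description precedes it below -/
import Mathlib

section
/- Let P be a vector space partition of PG(v-1,q) containing at least one element of dimension strictly larger than k (with 1 ≤ k ≤ v-1). Then the set H_k of points covered by elements of P of dimension at most k is q^k-divisible: for every hyperplane H, the number of points of H_k outside H is divisible by q^k. -/
/-!
Count vectors instead of points: every point outside `H` contains `q - 1` nonzero vectors, all
outside `H`. A subspace `A` not contained in `H` meets it in a hyperplane of `A`, so it has
`q ^ (dim A - 1) * (q - 1)` vectors outside `H` (and none if `A ≤ H`). The partition splits the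
`q ^ (v - 1) * (q - 1)` vectors outside `H` among its elements; the elements of dimension greater
than `k` contribute multiples of `q ^ k * (q - 1)`, hence so do the remaining ones.
-/

open Classical Module Finset

section DivisionRing

variable {K V : Type*} [DivisionRing K] [AddCommGroup V] [Module K V]

lemma finrank_inf_add_one_of_not_le [FiniteDimensional K V] {A H : Submodule K V}
    (hH : finrank K V ≤ finrank K H + 1) (hAH : ¬ A ≤ H) :
    finrank K ↥(A ⊓ H) + 1 = finrank K A := by
  have hlt : finrank K H < finrank K ↥(A ⊔ H) :=
    Submodule.finrank_lt_finrank_of_lt (right_lt_sup.mpr hAH)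
  have := Submodule.finrank_le (A ⊔ H)
  have := Submodule.finrank_sup_add_finrank_inf_eq A H
  omega

lemma pairwise_disjoint_of_existsUnique_mem {P : Finset (Submodule K V)}
    (hP : ∀ x : V, x ≠ 0 → ∃! A, A ∈ P ∧ x ∈ A) :
    (P : Set (Submodule K V)).Pairwise Disjoint :=
  fun A hA B hB hAB => Submodule.disjoint_def.mpr fun x hxA hxB => by
    by_contra hx
    exact hAB ((hP x hx).unique ⟨hA, hxA⟩ ⟨hB, hxB⟩)

lemma card_notMem_and_exists_mem_eq_sum [Fintype V] {Q : Finset (Submodule K V)}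
    (hQ : (Q : Set (Submodule K V)).Pairwise Disjoint) (H : Submodule K V) :
    #{x | x ∉ H ∧ ∃ A ∈ Q, x ∈ A} = ∑ A ∈ Q, #{x | x ∈ A ∧ x ∉ H} := by
  rw [← card_biUnion]
  · congr 1
    ext x
    simp only [mem_filter, mem_univ, true_and, mem_biUnion]
    tauto
  · intro A hA B hB hAB
    refine disjoint_left.mpr fun x hxA hxB => ?_
    simp only [mem_filter, mem_univ, true_and] at hxA hxB
    rw [Submodule.disjoint_def.mp (hQ hA hB hAB) x hxA.1 hxB.1] at hxA
    exact hxA.2 H.zero_mem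

end DivisionRing

section FiniteField

variable {K V : Type*} [Field K] [Fintype K] [AddCommGroup V] [Module K V] [Fintype V]

lemma card_mem_eq_pow_finrank (A : Submodule K V) :
    #{x | x ∈ A} = Fintype.card K ^ finrank K A := by
  rw [← Fintype.card_subtype]
  exact card_eq_pow_finrank

lemma card_mem_and_notMem_add_pow_finrank_inf (A H : Submodule K V) :
    #{x | x ∈ A ∧ x ∉ H} + Fintype.card K ^ finrank K ↥(A ⊓ H) =
      Fintype.card K ^ finrank K A := by
  rw [← card_mem_eq_pow_finrank, ← card_mem_eq_pow_finrank,
    ← card_filter_add_card_filter_not (s := {x | x ∈ A}) (· ∈ H)]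
  simp only [filter_filter, Submodule.mem_inf]
  exact add_comm _ _

lemma pow_mul_dvd_card_mem_and_notMem {H : Submodule K V}
    (hH : finrank K V ≤ finrank K H + 1) (A : Submodule K V) :
    Fintype.card K ^ (finrank K A - 1) * (Fintype.card K - 1) ∣ #{x | x ∈ A ∧ x ∉ H} := by
  by_cases hAH : A ≤ H
  · rw [filter_false_of_mem fun x _ ⟨hxA, hxH⟩ => hxH (hAH hxA), card_empty]
    exact dvd_zero _
  · have hA := finrank_inf_add_one_of_not_le hH hAH
    have hcount := card_mem_and_notMem_add_pow_finrank_inf A H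
    rw [← hA, pow_succ] at hcount
    rw [← hA, Nat.add_sub_cancel, Nat.mul_sub_one]
    exact dvd_of_eq (by omega)

lemma card_span_singleton_mem_eq_ncard_mul (𝒮 : Set (Submodule K V))
    (h𝒮 : ∀ W ∈ 𝒮, finrank K W = 1) :
    #{x : V | x ≠ 0 ∧ K ∙ x ∈ 𝒮} = 𝒮.ncard * (Fintype.card K - 1) := by
  rw [Set.ncard_eq_toFinset_card',
    card_eq_sum_card_fiberwise (f := fun x => K ∙ x) (t := 𝒮.toFinset)
      fun x hx => by simpa using (mem_filter.mp hx).2.2]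
  refine sum_const_nat fun W hW => ?_
  rw [Set.mem_toFinset] at hW
  have hfiber : filter (K ∙ · = W) {x : V | x ≠ 0 ∧ K ∙ x ∈ 𝒮} =
      ({x | x ∈ W} : Finset V).erase 0 := by
    ext x
    simp only [mem_filter, mem_univ, true_and, mem_erase]
    constructor
    · rintro ⟨⟨hx, -⟩, rfl⟩
      exact ⟨hx, Submodule.mem_span_singleton_self x⟩
    · rintro ⟨hx, hxW⟩
      rw [← eq_span_singleton_of_mem_of_finrank_eq_one (h𝒮 W hW) hxW hx]
      exact ⟨⟨hx, hW⟩, rfl⟩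
  rw [hfiber, card_erase_of_mem (by simp), card_mem_eq_pow_finrank, h𝒮 W hW, pow_one]

lemma pow_mul_sub_one_dvd_card_notMem_of_finrank_le {P : Finset (Submodule K V)}
    (hP : ∀ x : V, x ≠ 0 → ∃! A, A ∈ P ∧ x ∈ A) {H : Submodule K V}
    (hH : finrank K V ≤ finrank K H + 1) {k : ℕ} (hk : k ≤ finrank K V - 1) :
    Fintype.card K ^ k * (Fintype.card K - 1) ∣
      #{x | x ∉ H ∧ ∃ A ∈ P, finrank K A ≤ k ∧ x ∈ A} := by
  have hdisj := pairwise_disjoint_of_existsUnique_mem hP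
  have hdvd (A : Submodule K V) (hA : k ≤ finrank K A - 1) :
      Fintype.card K ^ k * (Fintype.card K - 1) ∣ #{x | x ∈ A ∧ x ∉ H} :=
    (Nat.mul_dvd_mul_right (Nat.pow_dvd_pow _ hA) _).trans
      (pow_mul_dvd_card_mem_and_notMem hH A)
  have htotal : Fintype.card K ^ k * (Fintype.card K - 1) ∣ #{x | x ∉ H ∧ ∃ A ∈ P, x ∈ A} := by
    convert hdvd ⊤ (by rwa [finrank_top]) using 2
    ext x
    simp only [mem_filter, mem_univ, true_and, Submodule.mem_top]
    exact ⟨And.left, fun hxH =>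
      ⟨hxH, (hP x (ne_of_mem_of_not_mem H.zero_mem hxH).symm).exists⟩⟩
  rw [card_notMem_and_exists_mem_eq_sum hdisj,
    ← sum_filter_add_sum_filter_not P fun A => finrank K A ≤ k] at htotal
  have hlarge : Fintype.card K ^ k * (Fintype.card K - 1) ∣
      ∑ A ∈ P.filter (fun A : Submodule K V => ¬ finrank K A ≤ k), #{x | x ∈ A ∧ x ∉ H} :=
    dvd_sum fun A hA => hdvd A (by have := (mem_filter.mp hA).2; omega)
  have hsmall : #{x | x ∉ H ∧ ∃ A ∈ P, finrank K A ≤ k ∧ x ∈ A} =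
      ∑ A ∈ P.filter (fun A : Submodule K V => finrank K A ≤ k), #{x | x ∈ A ∧ x ∉ H} := by
    rw [← card_notMem_and_exists_mem_eq_sum (hdisj.mono (coe_subset.mpr (filter_subset _ _)))]
    simp only [mem_filter, and_assoc]
  rw [hsmall]
  exact (Nat.dvd_add_left hlarge).mp htotal

end FiniteField

theorem supertail_divisible_general {K : Type} [Field K] [Fintype K] (q v k : ℕ)
    (hq : q = Fintype.card K) (hk2 : k ≤ v - 1)
    (P : Finset (Submodule K (Fin v → K)))
    (hpart : ∀ x : Fin v → K, x ≠ 0 → ∃! A, A ∈ P ∧ x ∈ A)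
    (H : Submodule K (Fin v → K)) (hH : finrank K ↥H = v - 1) :
    q ^ k ∣
      Set.ncard {W : Submodule K (Fin v → K) |
        finrank K ↥W = 1 ∧ ¬ W ≤ H ∧ ∃ A ∈ P, finrank K ↥A ≤ k ∧ W ≤ A} := by
  subst hq
  have hq1 : 0 < Fintype.card K - 1 := by have := Fintype.one_lt_card (α := K); omega
  rw [← Nat.mul_dvd_mul_iff_right hq1,
    ← card_span_singleton_mem_eq_ncard_mul _ fun W hW => hW.1]
  convert pow_mul_sub_one_dvd_card_notMem_of_finrank_le hpart (H := H) (k := k)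
    (by rw [finrank_fin_fun, hH]; omega) (by rwa [finrank_fin_fun]) using 2
  ext x
  have hx : x ∉ H → x ≠ 0 := fun hxH => (ne_of_mem_of_not_mem H.zero_mem hxH).symm
  simp only [mem_filter, mem_univ, true_and, Set.mem_ofPred_eq, Submodule.span_singleton_le_iff_mem]
  exact ⟨fun ⟨_, _, hxH, hA⟩ => ⟨hxH, hA⟩,
    fun ⟨hxH, hA⟩ => ⟨hx hxH, finrank_span_singleton (hx hxH), hxH, hA⟩⟩

/-- For a vector space partition P of PG(v-1,q) containing an element of
dimension larger than k, the set of points covered by the elements of dimension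
at most k is q^k-divisible. -/
theorem supertail_divisible {K : Type} [Field K] [Fintype K] (q v k : ℕ)
    (hq : q = Fintype.card K) (hk1 : 1 ≤ k) (hk2 : k ≤ v - 1)
    (P : Finset (Submodule K (Fin v → K)))
    (hbot : ∀ A ∈ P, A ≠ ⊥)
    (hpart : ∀ x : Fin v → K, x ≠ 0 → ∃! A, A ∈ P ∧ x ∈ A)
    (hex : ∃ A ∈ P, k < finrank K ↥A)
    (H : Submodule K (Fin v → K)) (hH : finrank K ↥H = v - 1) (hHtop : H ≠ ⊤) :
    q ^ k ∣
      Set.ncard {W : Submodule K (Fin v → K) |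
        finrank K ↥W = 1 ∧ ¬ W ≤ H ∧ ∃ A ∈ P, finrank K ↥A ≤ k ∧ W ≤ A} :=
  supertail_divisible_general q v k hq hk2 P hpart H hH
end

section
/- Every 4-divisible set of exactly 7 points in PG(v-1,2) is the point set of a plane (a 3-dimensional subspace of F_2^v). -/
/-!
Double count the pairs `(x, φ)` with `x ∈ S` and `φ` a linear functional with `φ x ≠ 0`. A nonzero
`x` is missed by half of the `2 ^ n` functionals, so there are `7 * 2 ^ (n - 1)` pairs. On the
other side, a functional vanishing on `W = span S` contributes nothing, and any other one
contributes a positive multiple of `4` that is at most `7`, that is, exactly `4`. There are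
`2 ^ n - 2 ^ (n - d)` of the latter, `d = dim W`, so `2 ^ (n - d + 2) = 2 ^ (n - 1)` and `d = 3`.
Then `S` consists of `7` nonzero vectors of the `8`-element space `W`, hence is `W \ {0}`.
-/

open Classical Module

open Finset Submodule

section

variable {K V : Type*} [Field K] [AddCommGroup V] [Module K V]

theorem Subspace.natCard_dualAnnihilator [FiniteDimensional K V] (W : Subspace K V) :
    Nat.card W.dualAnnihilator = Nat.card K ^ (finrank K V - finrank K W) := by
  rw [natCard_eq_pow_finrank (K := K), ← Subspace.finrank_add_finrank_dualAnnihilator_eq W,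
    Nat.add_sub_cancel_left]

theorem card_filter_notMem_dualAnnihilator [FiniteDimensional K V] [Fintype (Dual K V)]
    (W : Subspace K V) :
    #{φ : Dual K V | φ ∉ W.dualAnnihilator} =
      Nat.card K ^ finrank K V - Nat.card K ^ (finrank K V - finrank K W) := by
  rw [← Fintype.card_subtype, Fintype.card_subtype_compl, Fintype.card_eq_nat_card,
    Fintype.card_eq_nat_card, natCard_eq_pow_finrank (K := K), Subspace.dual_finrank_eq,
    Subspace.natCard_dualAnnihilator]

theorem Submodule.mem_dualAnnihilator_span_singleton {x : V} {φ : Dual K V} :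
    φ ∈ (K ∙ x).dualAnnihilator ↔ φ x = 0 := by
  simp only [mem_dualAnnihilator, mem_span_singleton, forall_exists_index, forall_apply_eq_imp_iff,
    map_smul, smul_eq_mul, mul_eq_zero]
  exact ⟨fun h => (h 1).resolve_left one_ne_zero, fun h _ => Or.inr h⟩

theorem card_filter_apply_ne_zero [DecidableEq K] [FiniteDimensional K V] [Fintype (Dual K V)]
    {x : V} (hx : x ≠ 0) :
    #{φ : Dual K V | φ x ≠ 0} = Nat.card K ^ finrank K V - Nat.card K ^ (finrank K V - 1) := by
  simp_rw [← finrank_span_singleton (K := K) hx, ← card_filter_notMem_dualAnnihilator,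
    mem_dualAnnihilator_span_singleton]

theorem sum_card_filter_apply_ne_zero [DecidableEq K] [FiniteDimensional K V] [Fintype (Dual K V)]
    {S : Finset V} (hS : ∀ x ∈ S, x ≠ 0) :
    ∑ φ : Dual K V, #{x ∈ S | φ x ≠ 0} =
      #S * (Nat.card K ^ finrank K V - Nat.card K ^ (finrank K V - 1)) := by
  calc ∑ φ : Dual K V, #{x ∈ S | φ x ≠ 0}
      = ∑ x ∈ S, #{φ : Dual K V | φ x ≠ 0} := by
        simp only [card_filter]
        exact sum_comm
    _ = #S * (Nat.card K ^ finrank K V - Nat.card K ^ (finrank K V - 1)) := by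
        rw [sum_congr rfl fun x hx => card_filter_apply_ne_zero (hS x hx), sum_const, smul_eq_mul]

-- `#{x ∈ S | φ x ≠ 0}` is the number of points of `S` off the hyperplane `ker φ`.
variable (K) in
def IsDivisible [DecidableEq K] (Δ : ℕ) (S : Finset V) : Prop :=
  ∀ φ : Dual K V, φ ≠ 0 → Δ ∣ #{x ∈ S | φ x ≠ 0}

namespace IsDivisible

variable [DecidableEq K] {Δ : ℕ} {S : Finset V}

theorem card_filter_apply_ne_zero_eq_ite (hS : IsDivisible K Δ S) (hlt : #S < 2 * Δ)
    (φ : Dual K V) :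
    #{x ∈ S | φ x ≠ 0} = if φ ∈ (span K (S : Set V)).dualAnnihilator then 0 else Δ := by
  rw [← SetLike.mem_coe, coe_dualAnnihilator_span]
  split_ifs with hφ
  · exact card_eq_zero.2 <| filter_eq_empty_iff.2 fun x hx => not_not.2 (hφ hx)
  · have hφ0 : φ ≠ 0 := by
      rintro rfl
      exact hφ fun x _ => rfl
    obtain ⟨x, hxS, hx⟩ := Set.not_subset.1 hφ
    exact Nat.eq_of_dvd_of_lt_two_mul (card_ne_zero.2 ⟨x, mem_filter.2 ⟨hxS, hx⟩⟩) (hS φ hφ0)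
      ((card_filter_le _ _).trans_lt hlt)

theorem card_mul_pow_sub_pow_eq [Finite K] [FiniteDimensional K V] (hS : IsDivisible K Δ S)
    (hS0 : ∀ x ∈ S, x ≠ 0) (hlt : #S < 2 * Δ) :
    #S * (Nat.card K ^ finrank K V - Nat.card K ^ (finrank K V - 1)) =
      Δ * (Nat.card K ^ finrank K V -
        Nat.card K ^ (finrank K V - finrank K (span K (S : Set V)))) := by
  have : Finite (Dual K V) := Module.finite_of_finite K
  let : Fintype (Dual K V) := Fintype.ofFinite _
  rw [← sum_card_filter_apply_ne_zero hS0, ← card_filter_notMem_dualAnnihilator,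
    sum_congr rfl fun φ _ => hS.card_filter_apply_ne_zero_eq_ite hlt φ, sum_ite, sum_const_zero,
    sum_const, smul_eq_mul, zero_add, mul_comm]

end IsDivisible

end

theorem IsDivisible.finrank_span_eq_three {V : Type*} [AddCommGroup V] [Module (ZMod 2) V]
    [FiniteDimensional (ZMod 2) V] {S : Finset V} (hS : IsDivisible (ZMod 2) 4 S)
    (hS0 : ∀ x ∈ S, x ≠ 0) (hcard : #S = 7) :
    finrank (ZMod 2) (span (ZMod 2) (S : Set V)) = 3 := by
  have hcount := hS.card_mul_pow_sub_pow_eq hS0 (by omega)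
  rw [hcard, Nat.card_zmod] at hcount
  set n := finrank (ZMod 2) V
  set d := finrank (ZMod 2) (span (ZMod 2) (S : Set V))
  have hd : d ≤ n := Submodule.finrank_le _
  obtain ⟨x, hx⟩ : S.Nonempty := card_pos.1 (by omega)
  obtain ⟨m, hm⟩ : ∃ m, n = m + 1 :=
    Nat.exists_eq_add_one.2 (finrank_pos_iff_exists_ne_zero.2 ⟨x, hS0 x hx⟩)
  rw [hm, Nat.add_sub_cancel, Nat.pow_succ] at hcount
  have hpow : 2 ^ (m + 1 - d + 2) = 2 ^ m := by
    rw [Nat.pow_add]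
    have := Nat.one_le_two_pow (n := m)
    omega
  have := Nat.pow_right_injective le_rfl hpow
  omega

theorem Submodule.coe_finset_eq_of_natCard_eq_card_add_one {R M : Type*} [Semiring R]
    [AddCommMonoid M] [Module R M] {W : Submodule R M} {S : Finset M} (hS0 : ∀ x ∈ S, x ≠ 0)
    (hSW : (S : Set M) ⊆ W) (hcard : Nat.card W = #S + 1) :
    (S : Set M) = {x | x ∈ W ∧ x ≠ 0} := by
  have : Finite W := Nat.finite_of_card_ne_zero (by omega)
  have hW : {x | x ∈ W ∧ x ≠ 0} = (W : Set M) \ {0} := rfl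
  refine Set.eq_of_subset_of_ncard_le (fun x hx => ⟨hSW hx, hS0 x hx⟩) ?_
    (hW ▸ (W : Set M).toFinite.sdiff)
  rw [hW, Set.ncard_sdiff_singleton_of_mem W.zero_mem, Set.ncard_coe_finset,
    ← Nat.card_coe_set_eq, SetLike.coe_sort_coe, hcard]
  omega

/-- Every 4-divisible set of exactly 7 points in PG(v-1,2) is the point set of
a plane, i.e. of a 3-dimensional subspace of F_2^v. -/
theorem four_divisible_card_seven_is_plane (v : ℕ)
    (S : Finset (Fin v → ZMod 2)) (h0 : ∀ x ∈ S, x ≠ 0)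
    (hdiv : ∀ φ : (Fin v → ZMod 2) →ₗ[ZMod 2] ZMod 2, φ ≠ 0 →
      4 ∣ (S.filter (fun x => φ x ≠ 0)).card)
    (hcard : S.card = 7) :
    ∃ W : Submodule (ZMod 2) (Fin v → ZMod 2), finrank (ZMod 2) ↥W = 3 ∧
      (S : Set (Fin v → ZMod 2)) = {x | x ∈ W ∧ x ≠ 0} := by
  have hrank := IsDivisible.finrank_span_eq_three hdiv h0 hcard
  refine ⟨span (ZMod 2) S, hrank, coe_finset_eq_of_natCard_eq_card_add_one h0 subset_span ?_⟩
  rw [natCard_eq_pow_finrank (K := ZMod 2), hrank, Nat.card_zmod, hcard]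
  rfl
end

section
/- Every 8-divisible set of exactly 15 points in PG(v-1,2) is the point set of a solid (a 4-dimensional subspace of F_2^v). -/
open Classical Module

namespace EightDiv

noncomputable def χ (t : ZMod 2) : ℤ := if t = 0 then 1 else -1

lemma χ_add (s t : ZMod 2) : χ (s + t) = χ s * χ t := by
  revert s t; decide

lemma χ_zero : χ 0 = 1 := rfl

/-- The dot-product linear functional. -/
noncomputable def dotL (v : ℕ) (a : Fin v → ZMod 2) :
    (Fin v → ZMod 2) →ₗ[ZMod 2] ZMod 2 where
  toFun x := dotProduct a x
  map_add' x y := dotProduct_add a x y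
  map_smul' c x := by
    simp [dotProduct, Finset.mul_sum, mul_left_comm]

lemma dotL_apply (v : ℕ) (a x : Fin v → ZMod 2) :
    dotL v a x = dotProduct a x := rfl

lemma dotL_ne_zero {v : ℕ} {a : Fin v → ZMod 2} (ha : a ≠ 0) : dotL v a ≠ 0 := by
  obtain ⟨j, hj⟩ : ∃ j, a j ≠ 0 := by
    by_contra h
    push_neg at h
    exact ha (funext h)
  intro h
  apply hj
  have := congrArg (fun φ => φ (Pi.single j (1 : ZMod 2))) h
  simpa [dotL_apply, dotProduct_single] using this

/-- Key character sum. -/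
lemma sum_chi {v : ℕ} (w : Fin v → ZMod 2) :
    ∑ a : Fin v → ZMod 2, χ (dotProduct a w) =
      if w = 0 then (2 ^ v : ℤ) else 0 := by
  by_cases hw : w = 0
  · subst hw
    simp [χ_zero, dotProduct_zero, Finset.card_univ]
  · rw [if_neg hw]
    obtain ⟨i, hi⟩ : ∃ i, w i ≠ 0 := by
      by_contra h
      push_neg at h
      exact hw (funext h)
    have hwi : w i = 1 := by
      have : (w i : ZMod 2) = 0 ∨ w i = 1 := by
        generalize w i = t; revert t; decide
      tauto
    set e : Fin v → ZMod 2 := Pi.single i (1 : ZMod 2) with he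
    have key : ∀ a : Fin v → ZMod 2,
        χ (dotProduct (a + e) w) = - χ (dotProduct a w) := by
      intro a
      rw [add_dotProduct, χ_add]
      have h1 : dotProduct e w = 1 := by
        rw [he, single_dotProduct, one_mul, hwi]
      rw [h1]
      have h2 : χ (1 : ZMod 2) = -1 := rfl
      rw [h2]; ring
    have hre : ∑ a : Fin v → ZMod 2, χ (dotProduct a w)
        = ∑ a : Fin v → ZMod 2, χ (dotProduct (a + e) w) :=
      (Fintype.sum_equiv (Equiv.addRight e)
        (fun a => χ (dotProduct (a + e) w))
        (fun a => χ (dotProduct a w))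
        (fun a => rfl)).symm
    have hneg : ∑ a : Fin v → ZMod 2, χ (dotProduct (a + e) w)
        = - ∑ a : Fin v → ZMod 2, χ (dotProduct a w) := by
      rw [Finset.sum_congr rfl (fun a _ => key a)]
      exact Finset.sum_neg_distrib (f := fun a => χ (dotProduct a w))
    rw [hneg] at hre
    linarith

end EightDiv

open EightDiv

/-- Every 8-divisible set of exactly 15 points in PG(v-1,2) is the point set of
a solid, i.e. of a 4-dimensional subspace of F_2^v. -/
theorem eight_divisible_card_fifteen_is_solid (v : ℕ)
    (S : Finset (Fin v → ZMod 2)) (h0 : ∀ x ∈ S, x ≠ 0)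
    (hdiv : ∀ φ : (Fin v → ZMod 2) →ₗ[ZMod 2] ZMod 2, φ ≠ 0 →
      8 ∣ (S.filter (fun x => φ x ≠ 0)).card)
    (hcard : S.card = 15) :
    ∃ W : Submodule (ZMod 2) (Fin v → ZMod 2), finrank (ZMod 2) ↥W = 4 ∧
      (S : Set (Fin v → ZMod 2)) = {x | x ∈ W ∧ x ≠ 0} := by
  classical
  set F : (Fin v → ZMod 2) → ℤ := fun a => ∑ x ∈ S, χ (dotProduct a x) with hF
  -- two-torsion facts
  have two_tor : ∀ s t : ZMod 2, s + t = 0 ↔ t = s := by decide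
  have hadd_eq_zero : ∀ x y : Fin v → ZMod 2, x + y = 0 ↔ y = x := by
    intro x y
    constructor
    · intro h; funext i
      exact (two_tor (x i) (y i)).mp (congrFun h i)
    · intro h; rw [h]; funext i; exact (two_tor (x i) (x i)).mpr rfl
  have h0S : (0 : Fin v → ZMod 2) ∉ S := fun h => h0 0 h rfl
  -- step 1 : F takes values 15 or -1
  have hmain : ∀ a : Fin v → ZMod 2, F a = 15 ∨ F a = -1 := by
    intro a
    by_cases ha : a = 0
    · left
      subst ha
      rw [hF]
      simp [χ_zero, zero_dotProduct, hcard]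
    · have hdvd := hdiv (dotL v a) (dotL_ne_zero ha)
      set k := (S.filter (fun x => dotL v a x ≠ 0)).card with hk
      have hkle : k ≤ 15 := hcard ▸ Finset.card_filter_le S _
      have hk08 : k = 0 ∨ k = 8 := by omega
      have hcards : (S.filter (fun x => ¬ (dotL v a x ≠ 0))).card = 15 - k := by
        have := Finset.card_filter_add_card_filter_not
          (s := S) (p := fun x => dotL v a x ≠ 0)
        omega
      have hsplit : F a = ((S.filter (fun x => ¬ (dotL v a x ≠ 0))).card : ℤ) - k := by
        rw [hF]
        simp only
        rw [← Finset.sum_filter_add_sum_filter_not S (fun x => dotL v a x ≠ 0)]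
        have h1 : ∑ x ∈ S.filter (fun x => dotL v a x ≠ 0), χ (dotProduct a x)
            = -(k : ℤ) := by
          have : ∀ x ∈ S.filter (fun x => dotL v a x ≠ 0),
              χ (dotProduct a x) = -1 := by
            intro x hx
            have hmem := Finset.mem_filter.mp hx
            have : dotProduct a x ≠ 0 := by
              rw [← dotL_apply]; exact hmem.2
            simp [χ, if_neg this]
          rw [Finset.sum_congr rfl this, Finset.sum_const, hk]
          simp
        have h2 : ∑ x ∈ S.filter (fun x => ¬ (dotL v a x ≠ 0)), χ (dotProduct a x)
            = ((S.filter (fun x => ¬ (dotL v a x ≠ 0))).card : ℤ) := by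
          have : ∀ x ∈ S.filter (fun x => ¬ (dotL v a x ≠ 0)),
              χ (dotProduct a x) = 1 := by
            intro x hx
            have hmem := Finset.mem_filter.mp hx
            have : dotProduct a x = 0 := by
              rw [← dotL_apply]
              by_contra hc; exact hmem.2 hc
            simp [χ, if_pos this]
          rw [Finset.sum_congr rfl this, Finset.sum_const]
          simp
        rw [h1, h2]; ring
      rw [hsplit, hcards]
      rcases hk08 with h | h <;> rw [h] <;> norm_num
  -- quadratic relation, hence cubic identity pointwise
  have hquad : ∀ a, F a ^ 3 = 14 * F a ^ 2 + 15 * F a := by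
    intro a
    rcases hmain a with h | h <;> rw [h] <;> norm_num
  -- first moment
  have hsum1 : ∑ a : Fin v → ZMod 2, F a = 0 := by
    rw [hF]
    simp only
    rw [Finset.sum_comm]
    apply Finset.sum_eq_zero
    intro x hx
    rw [sum_chi x, if_neg (h0 x hx)]
  -- second moment
  have hsum2 : ∑ a : Fin v → ZMod 2, F a ^ 2 = 15 * 2 ^ v := by
    have expand : ∀ a, F a ^ 2
        = ∑ x ∈ S, ∑ y ∈ S, χ (dotProduct a (x + y)) := by
      intro a
      rw [pow_two, hF]
      simp only
      rw [Finset.sum_mul_sum]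
      exact Finset.sum_congr rfl fun x _ => Finset.sum_congr rfl fun y _ => by
        rw [dotProduct_add, χ_add]
    calc ∑ a : Fin v → ZMod 2, F a ^ 2
        = ∑ x ∈ S, ∑ y ∈ S, ∑ a : Fin v → ZMod 2,
            χ (dotProduct a (x + y)) := by
          rw [Finset.sum_congr rfl (fun a _ => expand a), Finset.sum_comm]
          exact Finset.sum_congr rfl fun x _ => Finset.sum_comm
      _ = ∑ x ∈ S, ∑ y ∈ S, (if y = x then (2 ^ v : ℤ) else 0) := by
          apply Finset.sum_congr rfl; intro x _
          apply Finset.sum_congr rfl; intro y _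
          rw [sum_chi (x + y)]
          by_cases h : y = x
          · rw [if_pos ((hadd_eq_zero x y).mpr h), if_pos h]
          · rw [if_neg (fun hc => h ((hadd_eq_zero x y).mp hc)), if_neg h]
      _ = ∑ x ∈ S, (2 ^ v : ℤ) := by
          apply Finset.sum_congr rfl; intro x hx
          rw [Finset.sum_ite_eq' S x (fun _ => (2 ^ v : ℤ)), if_pos hx]
      _ = 15 * 2 ^ v := by rw [Finset.sum_const, hcard]; ring
  -- third moment
  set P : Finset ((Fin v → ZMod 2) × (Fin v → ZMod 2)) :=
    (S ×ˢ S).filter (fun p => p.1 + p.2 ∈ S) with hP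
  have hsum3 : ∑ a : Fin v → ZMod 2, F a ^ 3 = (P.card : ℤ) * 2 ^ v := by
    have expand : ∀ a, F a ^ 3
        = ∑ x ∈ S, ∑ y ∈ S, ∑ z ∈ S, χ (dotProduct a (x + y + z)) := by
      intro a
      have h3 : F a ^ 3 = F a * F a * F a := by ring
      rw [h3, hF]
      simp only
      rw [Finset.sum_mul_sum, Finset.sum_mul]
      apply Finset.sum_congr rfl; intro x _
      rw [Finset.sum_mul_sum]
      apply Finset.sum_congr rfl; intro y _
      apply Finset.sum_congr rfl; intro z _
      rw [dotProduct_add, dotProduct_add, χ_add, χ_add]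
    calc ∑ a : Fin v → ZMod 2, F a ^ 3
        = ∑ x ∈ S, ∑ y ∈ S, ∑ z ∈ S, ∑ a : Fin v → ZMod 2,
            χ (dotProduct a (x + y + z)) := by
          rw [Finset.sum_congr rfl (fun a _ => expand a), Finset.sum_comm]
          apply Finset.sum_congr rfl; intro x _
          rw [Finset.sum_comm]
          exact Finset.sum_congr rfl fun y _ => Finset.sum_comm
      _ = ∑ x ∈ S, ∑ y ∈ S, ∑ z ∈ S, (if z = x + y then (2 ^ v : ℤ) else 0) := by
          apply Finset.sum_congr rfl; intro x _
          apply Finset.sum_congr rfl; intro y _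
          apply Finset.sum_congr rfl; intro z _
          rw [sum_chi (x + y + z)]
          by_cases h : z = x + y
          · rw [if_pos ((hadd_eq_zero (x + y) z).mpr h), if_pos h]
          · rw [if_neg (fun hc => h ((hadd_eq_zero (x + y) z).mp hc)), if_neg h]
      _ = ∑ x ∈ S, ∑ y ∈ S, (if x + y ∈ S then (2 ^ v : ℤ) else 0) := by
          apply Finset.sum_congr rfl; intro x _
          apply Finset.sum_congr rfl; intro y _
          exact Finset.sum_ite_eq' S (x + y) (fun _ => (2 ^ v : ℤ))
      _ = (P.card : ℤ) * 2 ^ v := by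
          rw [hP, Finset.card_filter]
          push_cast
          rw [Finset.sum_mul, Finset.sum_product]
          apply Finset.sum_congr rfl; intro x _
          apply Finset.sum_congr rfl; intro y _
          by_cases h : x + y ∈ S
          · rw [if_pos h, if_pos h, one_mul]
          · rw [if_neg h, if_neg h, zero_mul]
  -- combine
  have hPcard : P.card = 210 := by
    have hsum : ∑ a : Fin v → ZMod 2, F a ^ 3
        = 14 * (∑ a : Fin v → ZMod 2, F a ^ 2) + 15 * (∑ a : Fin v → ZMod 2, F a) := by
      rw [Finset.mul_sum, Finset.mul_sum, ← Finset.sum_add_distrib]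
      exact Finset.sum_congr rfl fun a _ => hquad a
    rw [hsum3, hsum2, hsum1] at hsum
    have h2v : (2 : ℤ) ^ v ≠ 0 := pow_ne_zero v two_ne_zero
    have : (P.card : ℤ) = 210 := by
      have := hsum
      exact mul_right_cancel₀ h2v (by linarith)
    exact_mod_cast this
  -- closure of S under addition of distinct elements
  have hclosed : ∀ x ∈ S, ∀ y ∈ S, x ≠ y → x + y ∈ S := by
    by_contra hcon
    push_neg at hcon
    obtain ⟨x₀, hx₀, y₀, hy₀, hxy₀, hns⟩ := hcon
    have hsub : P ⊆ S.offDiag.erase (x₀, y₀) := by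
      intro p hp
      have hmem := Finset.mem_filter.mp hp
      have hps := Finset.mem_product.mp hmem.1
      refine Finset.mem_erase.mpr ⟨?_, ?_⟩
      · intro h
        rw [h] at hmem
        exact hns hmem.2
      · refine Finset.mem_offDiag.mpr ⟨hps.1, hps.2, ?_⟩
        intro h
        apply h0S
        have : p.1 + p.2 = 0 := by
          rw [← h]
          exact (hadd_eq_zero p.1 p.1).mpr rfl
        rw [← this]
        exact hmem.2
    have hmemoff : (x₀, y₀) ∈ S.offDiag := Finset.mem_offDiag.mpr ⟨hx₀, hy₀, hxy₀⟩
    have hle : P.card ≤ S.offDiag.card - 1 := by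
      calc P.card ≤ (S.offDiag.erase (x₀, y₀)).card := Finset.card_le_card hsub
        _ = S.offDiag.card - 1 := Finset.card_erase_of_mem hmemoff
    rw [Finset.offDiag_card, hcard, hPcard] at hle
    omega
  -- build the submodule
  refine ⟨{
      carrier := ↑(insert (0 : Fin v → ZMod 2) S)
      zero_mem' := by simp
      add_mem' := by
        intro a b ha hb
        simp only [Finset.coe_insert, Set.mem_insert_iff, Finset.mem_coe] at ha hb ⊢
        rcases ha with rfl | ha
        · rw [zero_add]; exact hb
        rcases hb with rfl | hb
        · rw [add_zero]; right; exact ha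
        by_cases hab : a = b
        · left; rw [hab]; exact (hadd_eq_zero b b).mpr rfl
        · right; exact hclosed a ha b hb hab
      smul_mem' := by
        intro c x hx
        have hc : c = 0 ∨ c = 1 := by revert c; decide
        rcases hc with rfl | rfl
        · simp
        · simpa using hx }, ?_, ?_⟩
  · -- finrank = 4
    set W : Submodule (ZMod 2) (Fin v → ZMod 2) :=
      { carrier := ↑(insert (0 : Fin v → ZMod 2) S)
        zero_mem' := by simp
        add_mem' := by
          intro a b ha hb
          simp only [Finset.coe_insert, Set.mem_insert_iff, Finset.mem_coe] at ha hb ⊢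
          rcases ha with rfl | ha
          · rw [zero_add]; exact hb
          rcases hb with rfl | hb
          · rw [add_zero]; right; exact ha
          by_cases hab : a = b
          · left; rw [hab]; exact (hadd_eq_zero b b).mpr rfl
          · right; exact hclosed a ha b hb hab
        smul_mem' := by
          intro c x hx
          have hc : c = 0 ∨ c = 1 := by revert c; decide
          rcases hc with rfl | rfl
          · simp
          · simpa using hx } with hW
    have hWmem : ∀ x, x ∈ W ↔ x ∈ insert (0 : Fin v → ZMod 2) S := by
      intro x; rfl
    have hfin : Nat.card ↥W = 16 := by
      have hequiv : ↥W ≃ {x // x ∈ insert (0 : Fin v → ZMod 2) S} :=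
        Equiv.subtypeEquivRight hWmem
      rw [Nat.card_congr hequiv, Nat.card_eq_finsetCard,
        Finset.card_insert_of_notMem h0S, hcard]
    have : Finite ↥W := Nat.finite_of_card_ne_zero (by omega)
    have hft : Fintype ↥W := Fintype.ofFinite ↥W
    have hcardW : Fintype.card ↥W = 16 := by
      rw [← Nat.card_eq_fintype_card]; exact hfin
    have hpow : Fintype.card ↥W = Fintype.card (ZMod 2) ^ finrank (ZMod 2) ↥W :=
      card_eq_pow_finrank
    rw [hcardW, ZMod.card] at hpow
    have h4 : (2 : ℕ) ^ 4 = 2 ^ finrank (ZMod 2) ↥W := by rw [← hpow]; norm_num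
    exact (Nat.pow_right_injective (le_refl 2) h4).symm
  · -- set equality
    ext x
    simp only [Finset.mem_coe, Set.mem_setOf_eq]
    constructor
    · intro hx
      refine ⟨?_, h0 x hx⟩
      show x ∈ ↑(insert (0 : Fin v → ZMod 2) S)
      simp [hx]
    · rintro ⟨hxW, hxne⟩
      have : x ∈ insert (0 : Fin v → ZMod 2) S := hxW
      rcases Finset.mem_insert.mp this with h | h
      · exact absurd h hxne
      · exact h
end

section
/- Every 4-divisible set of exactly 14 points in PG(v-1,2) is the disjoint union of the point sets of two disjoint planes (3-dimensional subspaces intersecting trivially). -/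
open Classical Module

/-!
Write `σ(φ) = ∑_{x ∈ S} (-1)^{φ x} = 14 - 2 wt(φ)` for linear forms `φ`. Divisibility gives
`wt(φ) ∈ {0, 4, 8, 12}`, and `12` is impossible: a form `ψ` separating the two points of `S` on
the hyperplane `ker φ` would give `wt ψ + wt (φ + ψ) = wt φ + 2`, against divisibility. Hence
`σ(φ) ∈ {6, -2}` whenever `φ p ≠ 0` for some `p ∈ S`, i.e. `(1 - (-1)^{φ p}) (σ - 6) (σ + 2) = 0`.
Since `∑_φ (-1)^{φ c} σ(φ)^k` is `|V^*|` times the number of `k`-tuples in `S` summing to `c`,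
multiplying this identity by powers of `σ` and summing over `φ` shows that each point of `S` lies
on exactly three lines contained in `S`, and computes the additive energy of `S`. Energy and parity
then force every `u ∉ S ∪ {0}` to be the sum of at most one pair of points of `S`, from which
`{0, p}` together with the lines of `S` through `p` is closed under addition: a plane. Two such
planes exhaust `S`.
-/

open Finset

namespace DivisibleSet

variable {V : Type*} [AddCommGroup V]

def signChar (a : ZMod 2) : ℤ := if a = 0 then 1 else -1

lemma signChar_add (a b : ZMod 2) : signChar (a + b) = signChar a * signChar b := by
  revert a b; decide

section Hyperplanes

variable [Module (ZMod 2) V]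

def weight (S : Finset V) (φ : Dual (ZMod 2) V) : ℕ := #{x ∈ S | φ x ≠ 0}

def FourDivisible (S : Finset V) : Prop := ∀ φ : Dual (ZMod 2) V, φ ≠ 0 → 4 ∣ weight S φ

def charSum (S : Finset V) (φ : Dual (ZMod 2) V) : ℤ := ∑ x ∈ S, signChar (φ x)

lemma charSum_eq (S : Finset V) (φ : Dual (ZMod 2) V) : charSum S φ = #S - 2 * weight S φ := by
  rw [charSum, weight, card_filter, card_eq_sum_ones, Nat.cast_sum, Nat.cast_sum, mul_sum,
    ← sum_sub_distrib]
  refine sum_congr rfl fun x _ => ?_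
  by_cases h : φ x = 0 <;> simp [signChar, h]

lemma sum_signChar_apply [Fintype (Dual (ZMod 2) V)] (c : V) :
    ∑ φ : Dual (ZMod 2) V, signChar (φ c) =
      if c = 0 then (Fintype.card (Dual (ZMod 2) V) : ℤ) else 0 := by
  split_ifs with hc
  · simp [hc, signChar]
  · obtain ⟨ψ, hψ⟩ : ∃ ψ : Dual (ZMod 2) V, ψ c ≠ 0 := by
      by_contra! h
      exact hc ((forall_dual_apply_eq_zero_iff (ZMod 2) c).mp h)
    have hψ1 : signChar (ψ c) = -1 := by simp [signChar, hψ]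
    have h := Fintype.sum_equiv (Equiv.addRight ψ) (fun φ => signChar (φ c))
      (fun φ => -signChar (φ c)) fun φ => by simp [signChar_add, hψ1]
    rw [sum_neg_distrib] at h
    linarith

lemma weight_add_weight_add (S : Finset V) (φ ψ : Dual (ZMod 2) V) :
    weight S ψ + weight S (φ + ψ) = weight S φ + 2 * #{x ∈ S | φ x = 0 ∧ ψ x ≠ 0} := by
  simp only [weight, card_filter, mul_sum, ← sum_add_distrib, LinearMap.add_apply]
  refine sum_congr rfl fun x _ => ?_
  generalize φ x = a
  generalize ψ x = b
  revert a b
  decide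

lemma FourDivisible.card_filter_apply_eq_zero_ne_two {S : Finset V} (hS : FourDivisible S)
    {φ : Dual (ZMod 2) V} (hφ : φ ≠ 0) : #{x ∈ S | φ x = 0} ≠ 2 := by
  intro h
  obtain ⟨p, q, hpq, hker⟩ := card_eq_two.mp h
  have hker' : ∀ x ∈ ({p, q} : Finset V), φ x = 0 := fun x hx => by
    rw [← hker] at hx; exact (mem_filter.mp hx).2
  have hp := hker' p (by simp)
  have hq := hker' q (by simp)
  obtain ⟨ψ, hψ⟩ : ∃ ψ : Dual (ZMod 2) V, ψ (p + q) ≠ 0 := by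
    by_contra! h
    rw [forall_dual_apply_eq_zero_iff, add_eq_zero_iff_eq_neg, ZModModule.neg_eq_self] at h
    exact hpq h
  have hψ0 : ψ ≠ 0 := by rintro rfl; exact hψ rfl
  have hφψ0 : φ + ψ ≠ 0 := fun h' => hψ (by simpa [hp, hq] using LinearMap.congr_fun h' (p + q))
  have hone : #{x ∈ S | φ x = 0 ∧ ψ x ≠ 0} = 1 := by
    rw [← filter_filter, hker]
    rw [map_add] at hψ
    obtain ⟨ha, hb⟩ | ⟨ha, hb⟩ : (ψ p = 1 ∧ ψ q = 0) ∨ (ψ p = 0 ∧ ψ q = 1) := by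
      revert hψ; generalize ψ p = a; generalize ψ q = b; revert a b; decide
    all_goals simp [filter_insert, filter_singleton, ha, hb]
  have := weight_add_weight_add S φ ψ
  have := hS ψ hψ0
  have := hS (φ + ψ) hφψ0
  have := hS φ hφ
  omega

lemma charSum_eq_six_or_eq_neg_two {S : Finset V} (hS : FourDivisible S) (hcard : #S = 14)
    {p : V} (hp : p ∈ S) {φ : Dual (ZMod 2) V} (hφ : φ p ≠ 0) :
    charSum S φ = 6 ∨ charSum S φ = -2 := by
  have hφ0 : φ ≠ 0 := by rintro rfl; exact hφ rfl
  have hsplit : weight S φ + #{x ∈ S | φ x = 0} = 14 := by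
    rw [weight, ← hcard, add_comm]
    exact card_filter_add_card_filter_not (fun x => φ x = 0)
  have hpos : 0 < weight S φ := card_pos.mpr ⟨p, mem_filter.mpr ⟨hp, hφ⟩⟩
  have := hS φ hφ0
  have := hS.card_filter_apply_eq_zero_ne_two hφ0
  have hw : weight S φ = 4 ∨ weight S φ = 8 := by omega
  rw [charSum_eq, hcard]
  rcases hw with hw | hw <;> simp [hw]

end Hyperplanes

variable [DecidableEq V]

/-- `walkCount S k c` counts the `(x₁, …, xₖ) ∈ Sᵏ` with `c + x₁ + ⋯ + xₖ = 0`. -/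
def walkCount (S : Finset V) : ℕ → V → ℕ
  | 0, c => if c = 0 then 1 else 0
  | k + 1, c => ∑ x ∈ S, walkCount S k (c + x)

/-- The `x ∈ S` with `u = x + x'` for some `x' ∈ S`; for `u ∈ S`, the points of the lines of `S`
through `u`. -/
def sumReps (S : Finset V) (u : V) : Finset V := {x ∈ S | u + x ∈ S}

lemma sumReps_zero (S : Finset V) : sumReps S 0 = S := by simp [sumReps]

def plane (S : Finset V) (p : V) : Finset V := insert 0 (insert p (sumReps S p))

lemma mem_of_mem_plane {S : Finset V} {p a : V} (hp : p ∈ S) (ha : a ∈ plane S p) (ha0 : a ≠ 0) :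
    a ∈ S := by
  simp only [plane, mem_insert] at ha
  rcases ha with rfl | rfl | ha
  exacts [absurd rfl ha0, hp, (mem_filter.mp ha).1]

variable [Module (ZMod 2) V]

lemma sum_signChar_mul_charSum_pow [Fintype (Dual (ZMod 2) V)] (S : Finset V) (k : ℕ) (c : V) :
    ∑ φ : Dual (ZMod 2) V, signChar (φ c) * charSum S φ ^ k =
      Fintype.card (Dual (ZMod 2) V) * walkCount S k c := by
  induction k generalizing c with
  | zero => simp [sum_signChar_apply, walkCount]
  | succ k ih =>
    calc ∑ φ : Dual (ZMod 2) V, signChar (φ c) * charSum S φ ^ (k + 1)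
        = ∑ φ : Dual (ZMod 2) V, ∑ x ∈ S, signChar (φ (c + x)) * charSum S φ ^ k := by
          refine sum_congr rfl fun φ _ => ?_
          simp only [charSum, pow_succ', mul_sum, ← mul_assoc, ← sum_mul, map_add, signChar_add]
      _ = ∑ x ∈ S, ∑ φ : Dual (ZMod 2) V, signChar (φ (c + x)) * charSum S φ ^ k := sum_comm
      _ = Fintype.card (Dual (ZMod 2) V) * walkCount S (k + 1) c := by
          simp only [ih, walkCount, Nat.cast_sum, mul_sum]

lemma walkCount_recurrence [Finite V] {S : Finset V} (hS : FourDivisible S) (hcard : #S = 14)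
    {p : V} (hp : p ∈ S) (j : ℕ) :
    (walkCount S (j + 2) 0 : ℤ) - 4 * walkCount S (j + 1) 0 - 12 * walkCount S j 0 =
      walkCount S (j + 2) p - 4 * walkCount S (j + 1) p - 12 * walkCount S j p := by
  have : Finite (Dual (ZMod 2) V) := Module.finite_of_finite (ZMod 2)
  let := Fintype.ofFinite (Dual (ZMod 2) V)
  have hvanish : ∀ φ : Dual (ZMod 2) V, (signChar (φ 0) - signChar (φ p)) *
      (charSum S φ ^ j * (charSum S φ ^ 2 - 4 * charSum S φ - 12)) = 0 := by
    intro φ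
    by_cases hφ : φ p = 0
    · simp [hφ]
    · rcases charSum_eq_six_or_eq_neg_two hS hcard hp hφ with h | h <;> rw [h] <;> ring
  have hmoment : ∀ c : V, ∑ φ : Dual (ZMod 2) V, signChar (φ c) *
      (charSum S φ ^ j * (charSum S φ ^ 2 - 4 * charSum S φ - 12)) =
      Fintype.card (Dual (ZMod 2) V) * ((walkCount S (j + 2) c : ℤ) -
        4 * walkCount S (j + 1) c - 12 * walkCount S j c) := by
    intro c
    have hexpand : ∀ φ : Dual (ZMod 2) V, signChar (φ c) *
        (charSum S φ ^ j * (charSum S φ ^ 2 - 4 * charSum S φ - 12)) =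
        signChar (φ c) * charSum S φ ^ (j + 2) - 4 * (signChar (φ c) * charSum S φ ^ (j + 1)) -
          12 * (signChar (φ c) * charSum S φ ^ j) := fun φ => by ring
    simp only [hexpand, sum_sub_distrib, ← mul_sum, sum_signChar_mul_charSum_pow]
    ring
  have hsum := sum_eq_zero (s := univ) fun φ _ => hvanish φ
  simp only [sub_mul, sum_sub_distrib, hmoment] at hsum
  have hpos : (0 : ℤ) < Fintype.card (Dual (ZMod 2) V) := by exact_mod_cast Fintype.card_pos
  rw [← mul_sub] at hsum
  linarith [(mul_eq_zero.mp hsum).resolve_left hpos.ne']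

lemma walkCount_one (S : Finset V) (c : V) : walkCount S 1 c = if c ∈ S then 1 else 0 := by
  simp [walkCount, add_eq_zero_iff_eq_neg, ZModModule.neg_eq_self]

lemma walkCount_two (S : Finset V) (u : V) : walkCount S 2 u = #(sumReps S u) := by
  rw [walkCount.eq_2, sumReps, card_filter]
  simp only [walkCount_one]

lemma walkCount_three (S : Finset V) (u : V) :
    walkCount S 3 u = ∑ x ∈ S, #(sumReps S (u + x)) := by
  rw [walkCount.eq_2]
  simp only [walkCount_two]

lemma sum_card_sumReps_mul [Fintype V] (S : Finset V) (f : V → ℕ) :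
    ∑ u, #(sumReps S u) * f u = ∑ x ∈ S, ∑ y ∈ S, f (x + y) := by
  simp only [sumReps, card_filter, sum_mul, ite_mul, one_mul, zero_mul]
  rw [sum_comm]
  refine sum_congr rfl fun x _ => ?_
  rw [Fintype.sum_equiv (Equiv.addRight x) _ (fun y => if y ∈ S then f (y + x) else 0)
    fun u => by simp [add_assoc, ZModModule.add_self], sum_ite_mem_eq]
  simp only [add_comm]

lemma even_card_sumReps (S : Finset V) {u : V} (hu : u ≠ 0) : Even #(sumReps S u) := by
  rw [← ZMod.natCast_eq_zero_iff_even, card_eq_sum_ones, Nat.cast_sum]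
  refine sum_involution (fun x _ => u + x) (fun _ _ => rfl)
    (fun x _ _ h => hu (add_eq_right.mp h)) (fun x hx => ?_) fun x _ => ?_
  · simp only [sumReps, mem_filter] at hx ⊢
    simpa [← add_assoc, ZModModule.add_self] using hx.symm
  · simp [← add_assoc, ZModModule.add_self]

lemma ne_of_mem_sumReps {S : Finset V} (h0 : (0 : V) ∉ S) {p x : V} (hx : x ∈ sumReps S p) :
    x ≠ p := by
  rintro rfl
  exact h0 (ZModModule.add_self x ▸ (mem_filter.mp hx).2)

lemma self_add_mem_sumReps {S : Finset V} {p x : V} (hx : x ∈ sumReps S p) :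
    p + x ∈ sumReps S p := by
  obtain ⟨hxS, hpxS⟩ := mem_filter.mp hx
  exact mem_filter.mpr ⟨hpxS, by rwa [← add_assoc, ZModModule.add_self, zero_add]⟩

section FourteenPoints

variable {S : Finset V} (hS : FourDivisible S) (hcard : #S = 14) (h0 : (0 : V) ∉ S)
include hS hcard h0

lemma card_sumReps_of_mem [Finite V] {p : V} (hp : p ∈ S) : #(sumReps S p) = 6 := by
  have h := walkCount_recurrence hS hcard hp 0
  simp only [zero_add, walkCount_two, walkCount_one, walkCount.eq_1, sumReps_zero, hcard, hp, h0,
    ne_of_mem_of_not_mem hp h0, if_true, if_false] at h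
  omega

lemma walkCount_three_of_mem [Finite V] {p : V} (hp : p ∈ S) : walkCount S 3 p = 64 := by
  have h := walkCount_recurrence hS hcard hp 1
  have h3 : walkCount S 3 0 = 84 := by
    rw [walkCount_three, sum_congr rfl fun x hx => by
      rw [zero_add, card_sumReps_of_mem hS hcard h0 hx], sum_const, hcard, smul_eq_mul]
  simp only [Nat.reduceAdd, walkCount_two, walkCount_one, h3, sumReps_zero, hcard, hp, h0,
    card_sumReps_of_mem hS hcard h0 hp, if_true, if_false] at h
  omega

lemma card_sumReps_le_two [Fintype V] {u : V} (hu0 : u ≠ 0) (huS : u ∉ S) :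
    #(sumReps S u) ≤ 2 := by
  obtain ⟨r, hr⟩ : ∃ r : V → ℕ, ∀ u, #(sumReps S u) = r u := ⟨_, fun _ => rfl⟩
  have hsum : ∑ u, r u = 196 := by
    simpa [hr, hcard] using sum_card_sumReps_mul S fun _ => 1
  have hsq : ∑ u, r u * r u = 896 := by
    simp only [← hr]
    rw [sum_card_sumReps_mul S _, sum_congr rfl fun x hx =>
      (walkCount_three S x).symm.trans (walkCount_three_of_mem hS hcard h0 hx), sum_const, hcard,
      smul_eq_mul]
  have htotal : ∑ u, (r u : ℤ) * (r u - 2) = 504 := by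
    have hexpand : ∀ u, (r u : ℤ) * (r u - 2) = ((r u * r u : ℕ) : ℤ) - 2 * r u := fun u => by
      push_cast; ring
    simp only [hexpand, sum_sub_distrib, ← mul_sum, ← Nat.cast_sum, hsq, hsum]
    norm_num
  have hS0 : r 0 = 14 := by rw [← hr, sumReps_zero, hcard]
  have hpoints : ∑ u ∈ insert 0 S, (r u : ℤ) * (r u - 2) = 504 := by
    rw [sum_insert h0, hS0, sum_congr rfl fun p hp => by
      rw [← hr, card_sumReps_of_mem hS hcard h0 hp], sum_const, hcard]
    norm_num
  -- the whole defect is used up on `{0} ∪ S`, and elsewhere `r u` is even, so `r u ∈ {0, 2}`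
  have hrest : ∑ u ∈ (insert 0 S)ᶜ, (r u : ℤ) * (r u - 2) = 0 := by
    linarith [sum_compl_add_sum (insert 0 S) fun u => (r u : ℤ) * (r u - 2)]
  have hnonneg : ∀ u ∈ (insert 0 S)ᶜ, 0 ≤ (r u : ℤ) * (r u - 2) := fun u hu => by
    obtain ⟨k, hk⟩ := even_card_sumReps S fun h => mem_compl.mp hu (mem_insert.mpr (.inl h))
    rw [← hr, hk]
    rcases k with _ | k
    · simp
    · push_cast; nlinarith
  have hu := (sum_eq_zero_iff_of_nonneg hnonneg).mp hrest u (by simp [hu0, huS])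
  rw [hr]
  rcases mul_eq_zero.mp hu with h | h <;> omega

lemma add_mem_of_add_add_mem [Fintype V] {a b c : V} (ha : a ∈ S) (hb : b ∈ S) (hc : c ∈ S)
    (habc : a + b + c ∈ S) (hab : a ≠ b) (hca : c ≠ a) (hcb : c ≠ b) : a + b ∈ S := by
  by_contra hnot
  have hne : a + b ≠ 0 := by rwa [Ne, add_eq_zero_iff_eq_neg, ZModModule.neg_eq_self]
  have hsub : {a, b, c} ⊆ sumReps S (a + b) := by
    intro x hx
    simp only [mem_insert, mem_singleton] at hx
    rcases hx with rfl | rfl | rfl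
    · exact mem_filter.mpr ⟨ha, by rwa [add_right_comm, ZModModule.add_self, zero_add]⟩
    · exact mem_filter.mpr ⟨hb, by rwa [add_assoc, ZModModule.add_self, add_zero]⟩
    · exact mem_filter.mpr ⟨hc, habc⟩
  have := card_le_card hsub
  rw [card_insert_of_notMem (by simp [hab, hca.symm]), card_pair hcb.symm] at this
  have := card_sumReps_le_two hS hcard h0 hne hnot
  omega

lemma add_add_mem_of_mem_sumReps [Fintype V] {p x y : V} (hp : p ∈ S) (hx : x ∈ sumReps S p)
    (hy : y ∈ sumReps S p) (hyx : y ≠ x) (hypx : y ≠ p + x) : p + x + y ∈ S := by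
  obtain ⟨hxS, hpxS⟩ := mem_filter.mp hx
  have hxp : x ≠ p := ne_of_mem_sumReps h0 hx
  -- a point of a line of `S` through `p + x` lies on a line of `S` through `p`; both sides have
  -- four elements, so they coincide and contain `y`
  have hsub : ((sumReps S (p + x)).erase p).erase x ⊆ ((sumReps S p).erase x).erase (p + x) := by
    intro w hw
    simp only [mem_erase, sumReps, mem_filter] at hw ⊢
    obtain ⟨hwx, hwp, hwS, hpxw⟩ := hw
    refine ⟨fun h => h0 (by rwa [h, ZModModule.add_self] at hpxw), hwx, hwS, ?_⟩
    exact add_mem_of_add_add_mem hS hcard h0 hp hwS hxS (by rwa [add_right_comm])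
      (Ne.symm hwp) hxp (Ne.symm hwx)
  have hpx : p + x ∈ (sumReps S p).erase x :=
    mem_erase.mpr ⟨fun h => h0 (add_eq_right.mp h ▸ hp), self_add_mem_sumReps hx⟩
  have hle :
      #(((sumReps S p).erase x).erase (p + x)) ≤ #(((sumReps S (p + x)).erase p).erase x) := by
    have := pred_card_le_card_erase (s := sumReps S (p + x)) (a := p)
    have := pred_card_le_card_erase (s := (sumReps S (p + x)).erase p) (a := x)
    rw [card_erase_of_mem hpx, card_erase_of_mem hx, card_sumReps_of_mem hS hcard h0 hp]
    rw [card_sumReps_of_mem hS hcard h0 hpxS] at *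
    omega
  have hy' : y ∈ ((sumReps S p).erase x).erase (p + x) := by simp [hy, hyx, hypx]
  rw [← eq_of_subset_of_card_le hsub hle] at hy'
  exact (mem_filter.mp (mem_of_mem_erase (mem_of_mem_erase hy'))).2

lemma add_mem_sumReps [Fintype V] {p x y : V} (hp : p ∈ S) (hx : x ∈ sumReps S p)
    (hy : y ∈ sumReps S p) (hyx : y ≠ x) (hypx : y ≠ p + x) : x + y ∈ sumReps S p := by
  have hpxy := add_add_mem_of_mem_sumReps hS hcard h0 hp hx hy hyx hypx
  refine mem_filter.mpr ⟨add_mem_of_add_add_mem hS hcard h0 (mem_filter.mp hx).1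
    (mem_filter.mp hy).1 hp ?_ hyx.symm (ne_of_mem_sumReps h0 hx).symm
    (ne_of_mem_sumReps h0 hy).symm, by rwa [← add_assoc]⟩
  rwa [add_comm, ← add_assoc]

lemma add_mem_plane [Fintype V] {p a b : V} (hp : p ∈ S) (ha : a ∈ plane S p)
    (hb : b ∈ plane S p) : a + b ∈ plane S p := by
  simp only [plane, mem_insert] at ha hb ⊢
  rcases ha with rfl | rfl | ha
  · simpa using hb
  · rcases hb with rfl | rfl | hb
    · simp
    · simp [ZModModule.add_self]
    · exact .inr (.inr (self_add_mem_sumReps hb))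
  · rcases hb with rfl | rfl | hb
    · simp [ha]
    · exact .inr (.inr (add_comm a b ▸ self_add_mem_sumReps ha))
    · by_cases hba : b = a
      · simp [hba, ZModModule.add_self]
      by_cases hbpa : b = p + a
      · right; left; rw [hbpa, add_left_comm, ZModModule.add_self, add_zero]
      exact .inr (.inr (add_mem_sumReps hS hcard h0 hp ha hb hba hbpa))

lemma card_plane [Finite V] {p : V} (hp : p ∈ S) : #(plane S p) = 8 := by
  have h0p : (0 : V) ∉ insert p (sumReps S p) := by
    simp only [mem_insert, not_or]
    exact ⟨(ne_of_mem_of_not_mem hp h0).symm, fun h => h0 (mem_filter.mp h).1⟩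
  rw [plane, card_insert_of_notMem h0p,
    card_insert_of_notMem fun h => ne_of_mem_sumReps h0 h rfl, card_sumReps_of_mem hS hcard h0 hp]

lemma plane_eq_of_mem [Fintype V] {p x : V} (hp : p ∈ S) (hx : x ∈ plane S p) (hx0 : x ≠ 0) :
    plane S x = plane S p := by
  have hxS := mem_of_mem_plane hp hx hx0
  refine (eq_of_subset_of_card_le (fun z hz => ?_) ?_).symm
  · by_cases hz0 : z = 0
    · exact hz0 ▸ mem_insert_self 0 _
    by_cases hzx : z = x
    · rw [hzx]; exact mem_insert_of_mem (mem_insert_self x _)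
    have hxz0 : x + z ≠ 0 := by
      rwa [Ne, add_eq_zero_iff_eq_neg, ZModModule.neg_eq_self, eq_comm]
    refine mem_insert_of_mem (mem_insert_of_mem (mem_filter.mpr ⟨mem_of_mem_plane hp hz hz0, ?_⟩))
    exact mem_of_mem_plane hp (add_mem_plane hS hcard h0 hp hx hz) hxz0
  · rw [card_plane hS hcard h0 hp, card_plane hS hcard h0 hxS]

lemma exists_two_planes [Fintype V] :
    ∃ p ∈ S, ∃ q ∈ S, plane S p ∩ plane S q = {0} ∧ S = (plane S p ∪ plane S q).erase 0 := by
  obtain ⟨p, hp⟩ : S.Nonempty := card_pos.mp (by omega)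
  obtain ⟨q, hq, hqp⟩ : ∃ q ∈ S, q ∉ plane S p := by
    by_contra! hsub
    have := card_lt_card ((ssubset_iff_of_subset hsub).mpr ⟨0, mem_insert_self 0 _, h0⟩)
    rw [card_plane hS hcard h0 hp] at this
    omega
  have hinter : plane S p ∩ plane S q = {0} := by
    refine eq_singleton_iff_unique_mem.mpr ⟨mem_inter.mpr ⟨mem_insert_self 0 _,
      mem_insert_self 0 _⟩, fun x hx => ?_⟩
    by_contra hx0
    obtain ⟨hxp, hxq⟩ := mem_inter.mp hx
    apply hqp
    rw [← plane_eq_of_mem hS hcard h0 hp hxp hx0, plane_eq_of_mem hS hcard h0 hq hxq hx0]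
    exact mem_insert_of_mem (mem_insert_self q _)
  refine ⟨p, hp, q, hq, hinter, (eq_of_subset_of_card_le (fun x hx => ?_) ?_).symm⟩
  · obtain ⟨hx0, hx⟩ := mem_erase.mp hx
    rcases mem_union.mp hx with hx | hx
    exacts [mem_of_mem_plane hp hx hx0, mem_of_mem_plane hq hx hx0]
  · have := card_union_add_card_inter (plane S p) (plane S q)
    rw [hinter, card_plane hS hcard h0 hp, card_plane hS hcard h0 hq, card_singleton] at this
    have h0pq : (0 : V) ∈ plane S p ∪ plane S q := mem_union_left _ (mem_insert_self 0 _)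
    rw [card_erase_of_mem h0pq, hcard]
    omega

lemma exists_submodule_coe_eq_plane [Fintype V] {p : V} (hp : p ∈ S) :
    ∃ W : Submodule (ZMod 2) V, (W : Set V) = plane S p ∧ finrank (ZMod 2) W = 3 := by
  let W : AddSubgroup V :=
    { carrier := plane S p
      add_mem' := add_mem_plane hS hcard h0 hp
      zero_mem' := mem_insert_self 0 _
      neg_mem' := by simp [ZModModule.neg_eq_self] }
  refine ⟨AddSubgroup.toZModSubmodule 2 W, rfl, ?_⟩
  have h := natCard_eq_pow_finrank (K := ZMod 2) (V := AddSubgroup.toZModSubmodule 2 W)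
  have hW : Nat.card (AddSubgroup.toZModSubmodule 2 W) = 8 := by
    rw [← card_plane hS hcard h0 hp]
    exact (Nat.card_coe_set_eq _).trans (Set.ncard_coe_finset _)
  rw [hW, Nat.card_zmod] at h
  exact Nat.pow_right_injective le_rfl (h.symm.trans (by norm_num) : 2 ^ _ = 2 ^ 3)

end FourteenPoints

end DivisibleSet

/-- Every 4-divisible set of exactly 14 points in PG(v-1,2) is the disjoint
union of the point sets of two disjoint planes. -/
theorem four_divisible_card_fourteen_two_planes (v : ℕ)
    (S : Finset (Fin v → ZMod 2)) (h0 : ∀ x ∈ S, x ≠ 0)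
    (hdiv : ∀ φ : (Fin v → ZMod 2) →ₗ[ZMod 2] ZMod 2, φ ≠ 0 →
      4 ∣ (S.filter (fun x => φ x ≠ 0)).card)
    (hcard : S.card = 14) :
    ∃ W₁ W₂ : Submodule (ZMod 2) (Fin v → ZMod 2),
      finrank (ZMod 2) ↥W₁ = 3 ∧ finrank (ZMod 2) ↥W₂ = 3 ∧ W₁ ⊓ W₂ = ⊥ ∧
      (S : Set (Fin v → ZMod 2)) = {x | x ≠ 0 ∧ (x ∈ W₁ ∨ x ∈ W₂)} := by
  have h0' : (0 : Fin v → ZMod 2) ∉ S := fun h => h0 0 h rfl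
  obtain ⟨p, hp, q, hq, hinter, hS⟩ := DivisibleSet.exists_two_planes hdiv hcard h0'
  obtain ⟨W₁, hW₁, hW₁rank⟩ := DivisibleSet.exists_submodule_coe_eq_plane hdiv hcard h0' hp
  obtain ⟨W₂, hW₂, hW₂rank⟩ := DivisibleSet.exists_submodule_coe_eq_plane hdiv hcard h0' hq
  refine ⟨W₁, W₂, hW₁rank, hW₂rank, eq_bot_iff.mpr fun x hx => ?_, ?_⟩
  · rw [Submodule.mem_inf, ← SetLike.mem_coe, ← SetLike.mem_coe, hW₁, hW₂, mem_coe, mem_coe,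
      ← mem_inter, hinter, mem_singleton] at hx
    exact (Submodule.mem_bot _).mpr hx
  · ext x
    rw [mem_coe, Finset.ext_iff.mp hS x, mem_erase, mem_union, ← mem_coe, ← mem_coe, ← hW₁, ← hW₂]
    rfl
end

section
/- Let P be a vector space partition of PG(v-1,2) containing an element of dimension at least 3. Then P cannot have exactly one line and five points among its elements of dimension at most 2 (supertail of type 2^1 1^5). -/
open Classical Module Finset Matrix

namespace NS

variable {v : ℕ}

lemma two_ne0 {x : ZMod 2} (h : x ≠ 0) : x = 1 := by
  revert h; revert x; decide

lemma addself (x : (Fin v → ZMod 2)) : x + x = 0 := by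
  funext i
  show x i + x i = 0
  exact CharTwo.add_self_eq_zero _

/-- card of the points of a submodule -/
lemma card_mem (A : Submodule (ZMod 2) (Fin v → ZMod 2)) :
    (univ.filter (fun x => x ∈ A)).card = 2 ^ finrank (ZMod 2) ↥A := by
  have h1 : (univ.filter (fun x => x ∈ A)).card = Fintype.card ↥A :=
    (Fintype.card_subtype _).symm
  have h2 : Fintype.card ↥A = Fintype.card (ZMod 2) ^ finrank (ZMod 2) ↥A :=
    card_eq_pow_finrank
  rw [h1, h2, ZMod.card]

/-- halving lemma -/
lemma card_half (A : Submodule (ZMod 2) (Fin v → ZMod 2)) (w a : (Fin v → ZMod 2)) (haA : a ∈ A)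
    (hwa : w ⬝ᵥ a ≠ 0) :
    2 * (univ.filter (fun x => x ∈ A ∧ w ⬝ᵥ x = 0)).card = 2 ^ finrank (ZMod 2) ↥A := by
  classical
  set Z := univ.filter (fun x => x ∈ A ∧ w ⬝ᵥ x = 0) with hZ
  set O := univ.filter (fun x => x ∈ A ∧ w ⬝ᵥ x ≠ 0) with hO
  have hcards : Z.card + O.card = 2 ^ finrank (ZMod 2) ↥A := by
    rw [← card_mem A]
    rw [hZ, hO]
    rw [← Finset.filter_filter, ← Finset.filter_filter]
    exact Finset.card_filter_add_card_filter_not (fun x => w ⬝ᵥ x = 0)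
  have hbij : Z.card = O.card := by
    apply Finset.card_nbij' (i := fun x => x + a) (j := fun x => x + a)
    · intro x hx
      simp only [hZ, Finset.mem_coe, Finset.mem_filter] at hx
      simp only [hO, Finset.mem_coe, Finset.mem_filter, Finset.mem_univ, true_and]
      refine ⟨A.add_mem hx.2.1 haA, ?_⟩
      rw [dotProduct_add, hx.2.2, zero_add]
      exact hwa
    · intro x hx
      simp only [hO, Finset.mem_coe, Finset.mem_filter] at hx
      simp only [hZ, Finset.mem_coe, Finset.mem_filter, Finset.mem_univ, true_and]
      refine ⟨A.add_mem hx.2.1 haA, ?_⟩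
      rw [dotProduct_add, two_ne0 hx.2.2, two_ne0 hwa]
      decide
    · intro x _; show x + a + a = x; rw [add_assoc, addself, add_zero]
    · intro x _; show x + a + a = x; rw [add_assoc, addself, add_zero]
  omega


lemma cA_pow (A : Submodule (ZMod 2) (Fin v → ZMod 2)) (w : (Fin v → ZMod 2)) :
    ∃ e, (univ.filter (fun x => x ∈ A ∧ w ⬝ᵥ x = 0)).card = 2 ^ e ∧
      finrank (ZMod 2) ↥A ≤ e + 1 ∧ e ≤ finrank (ZMod 2) ↥A := by
  by_cases h : ∃ a ∈ A, w ⬝ᵥ a ≠ 0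
  · obtain ⟨a, haA, hwa⟩ := h
    have hd := card_half A w a haA hwa
    have ha0 : a ≠ 0 := by rintro rfl; exact hwa (dotProduct_zero w)
    have hA1 : 1 ≤ finrank (ZMod 2) ↥A := by
      rw [Nat.one_le_iff_ne_zero]
      intro h0
      have hbot : A = ⊥ := Submodule.finrank_eq_zero.mp h0
      rw [hbot] at haA
      exact ha0 ((Submodule.mem_bot _).mp haA)
    refine ⟨finrank (ZMod 2) ↥A - 1, ?_, by omega, by omega⟩
    have h2 : 2 ^ finrank (ZMod 2) ↥A = 2 * 2 ^ (finrank (ZMod 2) ↥A - 1) := by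
      rw [← pow_succ']
      congr 1
      omega
    omega
  · push_neg at h
    refine ⟨finrank (ZMod 2) ↥A, ?_, by omega, le_rfl⟩
    rw [← card_mem A]
    congr 1
    ext x
    simp only [Finset.mem_filter, Finset.mem_univ, true_and]
    exact ⟨fun h' => h'.1, fun hx => ⟨hx, h x hx⟩⟩

lemma cA_succ (A : Submodule (ZMod 2) (Fin v → ZMod 2)) (w : (Fin v → ZMod 2)) :
    ∃ e, (univ.filter (fun x => x ∈ A ∧ w ⬝ᵥ x = 0 ∧ x ≠ 0)).card + 1 = 2 ^ e ∧
      finrank (ZMod 2) ↥A ≤ e + 1 ∧ e ≤ finrank (ZMod 2) ↥A := by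
  obtain ⟨e, hc, h1, h2⟩ := cA_pow A w
  refine ⟨e, ?_, h1, h2⟩
  have h0 : (0 : (Fin v → ZMod 2)) ∈ univ.filter (fun x => x ∈ A ∧ w ⬝ᵥ x = 0) := by
    simp [A.zero_mem]
  have herase : univ.filter (fun x => x ∈ A ∧ w ⬝ᵥ x = 0 ∧ x ≠ 0)
      = (univ.filter (fun x => x ∈ A ∧ w ⬝ᵥ x = 0)).erase 0 := by
    ext x
    simp only [Finset.mem_erase, Finset.mem_filter, Finset.mem_univ, true_and]
    tauto
  rw [herase, Finset.card_erase_of_mem h0, hc]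
  have h3 : 1 ≤ 2 ^ e := Nat.one_le_two_pow
  omega

lemma cA_zero (A : Submodule (ZMod 2) (Fin v → ZMod 2)) :
    (univ.filter (fun x => x ∈ A ∧ (0 : (Fin v → ZMod 2)) ⬝ᵥ x = 0 ∧ x ≠ 0)).card
      = 2 ^ finrank (ZMod 2) ↥A - 1 := by
  have herase : univ.filter (fun x => x ∈ A ∧ (0 : (Fin v → ZMod 2)) ⬝ᵥ x = 0 ∧ x ≠ 0)
      = (univ.filter (fun x => x ∈ A)).erase 0 := by
    ext x
    simp only [Finset.mem_erase, Finset.mem_filter, Finset.mem_univ, true_and,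
      zero_dotProduct]
    tauto
  rw [herase, Finset.card_erase_of_mem (by simp [A.zero_mem]), card_mem]


noncomputable def cnt (A : Submodule (ZMod 2) (Fin v → ZMod 2)) (w : (Fin v → ZMod 2)) : ℕ :=
  (univ.filter (fun x => x ∈ A ∧ w ⬝ᵥ x = 0 ∧ x ≠ 0)).card

lemma sum_cnt (P S : Finset (Submodule (ZMod 2) (Fin v → ZMod 2))) (hS : S ⊆ P)
    (hpart : ∀ x : (Fin v → ZMod 2), x ≠ 0 → ∃! A, A ∈ P ∧ x ∈ A) (w : (Fin v → ZMod 2)) :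
    (univ.filter (fun x => (∃ A ∈ S, x ∈ A) ∧ w ⬝ᵥ x = 0 ∧ x ≠ 0)).card
      = ∑ A ∈ S, cnt A w := by
  classical
  unfold cnt
  have hdis : ∀ A ∈ S, ∀ B ∈ S, A ≠ B →
      Disjoint (univ.filter (fun x => x ∈ A ∧ w ⬝ᵥ x = 0 ∧ x ≠ 0))
        (univ.filter (fun x => x ∈ B ∧ w ⬝ᵥ x = 0 ∧ x ≠ 0)) := by
    intro A hA B hB hne
    rw [Finset.disjoint_left]
    intro x hx1 hx2
    simp only [Finset.mem_filter, Finset.mem_univ, true_and] at hx1 hx2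
    obtain ⟨C, -, hC⟩ := hpart x hx1.2.2
    exact hne ((hC A ⟨hS hA, hx1.1⟩).trans (hC B ⟨hS hB, hx2.1⟩).symm)
  rw [← Finset.card_biUnion hdis]
  congr 1
  ext x
  simp only [Finset.mem_biUnion, Finset.mem_filter, Finset.mem_univ, true_and]
  tauto

lemma cast4 {e : ℕ} (he : 2 ≤ e) : ((2 ^ e - 1 : ℕ) : ZMod 4) = 3 := by
  have h1 : 1 ≤ 2 ^ e := Nat.one_le_two_pow
  have h2 : (2 : ZMod 4) ^ e = 0 := by
    obtain ⟨k, rfl⟩ : ∃ k, e = 2 + k := ⟨e - 2, by omega⟩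
    rw [pow_add, show (2 : ZMod 4) ^ 2 = 0 from by decide, zero_mul]
  rw [Nat.cast_sub h1]
  push_cast
  rw [h2]
  decide



lemma cnt_zero (A : Submodule (ZMod 2) (Fin v → ZMod 2)) :
    cnt A 0 = 2 ^ finrank (ZMod 2) ↥A - 1 := cA_zero A

lemma cnt_big (A : Submodule (ZMod 2) (Fin v → ZMod 2)) (w : (Fin v → ZMod 2))
    (h3 : 3 ≤ finrank (ZMod 2) ↥A) : ((cnt A w : ℕ) : ZMod 4) = 3 := by
  obtain ⟨e, he, h1, h2⟩ := cA_succ A w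
  have hce : cnt A w = 2 ^ e - 1 := by
    have : cnt A w + 1 = 2 ^ e := he
    omega
  rw [hce]
  exact cast4 (by omega)

lemma cnt_le (A : Submodule (ZMod 2) (Fin v → ZMod 2)) (w : (Fin v → ZMod 2)) : cnt A w ≤ cnt A 0 := by
  apply Finset.card_le_card
  intro x hx
  simp only [Finset.mem_filter, Finset.mem_univ, true_and] at hx ⊢
  exact ⟨hx.1, zero_dotProduct x, hx.2.2⟩

lemma global_count (P : Finset (Submodule (ZMod 2) (Fin v → ZMod 2)))
    (hpart : ∀ x : (Fin v → ZMod 2), x ≠ 0 → ∃! A, A ∈ P ∧ x ∈ A) (w : (Fin v → ZMod 2)) :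
    ∑ A ∈ P, cnt A w
      = (univ.filter (fun x => x ∈ (⊤ : Submodule (ZMod 2) (Fin v → ZMod 2)) ∧ w ⬝ᵥ x = 0 ∧ x ≠ 0)).card := by
  rw [← sum_cnt P P subset_rfl hpart]
  congr 1
  ext x
  simp only [Finset.mem_filter, Finset.mem_univ, true_and, Submodule.mem_top]
  constructor
  · rintro ⟨-, h⟩
    exact h
  · rintro ⟨hq, h0⟩
    obtain ⟨A, ⟨hAP, hxA⟩, -⟩ := hpart x h0
    exact ⟨⟨A, hAP, hxA⟩, hq, h0⟩

lemma ftop_rank : finrank (ZMod 2) (Fin v → ZMod 2) = v := by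
  rw [Module.finrank_pi, Fintype.card_fin]

lemma top_rank : finrank (ZMod 2) ↥(⊤ : Submodule (ZMod 2) (Fin v → ZMod 2)) = v := by
  rw [finrank_top, ftop_rank]

lemma top_count0 :
    (univ.filter (fun x => x ∈ (⊤ : Submodule (ZMod 2) (Fin v → ZMod 2)) ∧ (0 : (Fin v → ZMod 2)) ⬝ᵥ x = 0 ∧ x ≠ 0)).card
      = 2 ^ v - 1 := by
  have h := cA_zero (⊤ : Submodule (ZMod 2) (Fin v → ZMod 2))
  rwa [top_rank] at h

lemma top_countw (w : (Fin v → ZMod 2)) (hw : w ≠ 0) (hv : 1 ≤ v) :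
    (univ.filter (fun x => x ∈ (⊤ : Submodule (ZMod 2) (Fin v → ZMod 2)) ∧ w ⬝ᵥ x = 0 ∧ x ≠ 0)).card
      = 2 ^ (v - 1) - 1 := by
  obtain ⟨i, hi⟩ := Function.ne_iff.mp hw
  have hwa : w ⬝ᵥ Pi.single i 1 ≠ 0 := by
    rw [dotProduct_single, mul_one]
    simpa using hi
  have hh := card_half (⊤ : Submodule (ZMod 2) (Fin v → ZMod 2)) w (Pi.single i 1) trivial hwa
  rw [top_rank] at hh
  have hv2 : 2 ^ v = 2 * 2 ^ (v - 1) := by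
    rw [← pow_succ']
    congr 1
    omega
  have h0 : (0 : (Fin v → ZMod 2)) ∈ univ.filter
      (fun x => x ∈ (⊤ : Submodule (ZMod 2) (Fin v → ZMod 2)) ∧ w ⬝ᵥ x = 0) := by
    simp
  have herase : univ.filter (fun x => x ∈ (⊤ : Submodule (ZMod 2) (Fin v → ZMod 2)) ∧ w ⬝ᵥ x = 0 ∧ x ≠ 0)
      = (univ.filter (fun x => x ∈ (⊤ : Submodule (ZMod 2) (Fin v → ZMod 2)) ∧ w ⬝ᵥ x = 0)).erase 0 := by
    ext x
    simp only [Finset.mem_erase, Finset.mem_filter, Finset.mem_univ, true_and]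
    tauto
  rw [herase, Finset.card_erase_of_mem h0]
  omega

def chi : ZMod 2 → ℤ := fun x => if x = 0 then 1 else -1

theorem main (v : ℕ) (P : Finset (Submodule (ZMod 2) (Fin v → ZMod 2)))
    (hbot : ∀ A ∈ P, A ≠ ⊥)
    (hpart : ∀ x : Fin v → ZMod 2, x ≠ 0 → ∃! A, A ∈ P ∧ x ∈ A)
    (hex : ∃ A ∈ P, 3 ≤ finrank (ZMod 2) ↥A)
    (h2 : (P.filter (fun (A : Submodule (ZMod 2) (Fin v → ZMod 2)) => finrank (ZMod 2) ↥A = 2)).card = 1)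
    (h5 : (P.filter (fun (A : Submodule (ZMod 2) (Fin v → ZMod 2)) => finrank (ZMod 2) ↥A = 1)).card = 5) :
    False := by
  classical
  obtain ⟨A0, hA0P, hA03⟩ := hex
  have hrank1 : ∀ A ∈ P, 1 ≤ finrank (ZMod 2) ↥A := by
    intro A hA
    rw [Nat.one_le_iff_ne_zero]
    exact fun h0 => hbot A hA (Submodule.finrank_eq_zero.mp h0)
  have hv : 3 ≤ v := by
    have h1 : finrank (ZMod 2) ↥A0 ≤ finrank (ZMod 2) (Fin v → ZMod 2) := A0.finrank_le
    rw [ftop_rank] at h1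
    omega
  set smalls := P.filter (fun (A : Submodule (ZMod 2) (Fin v → ZMod 2)) => ¬ 2 < finrank (ZMod 2) ↥A) with hsmalls
  set bigs := P.filter (fun (A : Submodule (ZMod 2) (Fin v → ZMod 2)) => 2 < finrank (ZMod 2) ↥A) with hbigs
  set N := bigs.card with hN
  -- c 0 = 8
  have hc0 : ∑ A ∈ smalls, cnt A 0 = 8 := by
    have hsplit2 := Finset.sum_filter_add_sum_filter_not smalls
      (fun (A : Submodule (ZMod 2) (Fin v → ZMod 2)) => finrank (ZMod 2) ↥A = 2) (fun (A : Submodule (ZMod 2) (Fin v → ZMod 2)) => cnt A 0)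
    have hf2 : smalls.filter (fun (A : Submodule (ZMod 2) (Fin v → ZMod 2)) => finrank (ZMod 2) ↥A = 2)
        = P.filter (fun (A : Submodule (ZMod 2) (Fin v → ZMod 2)) => finrank (ZMod 2) ↥A = 2) := by
      rw [hsmalls, Finset.filter_filter]
      apply Finset.filter_congr
      intro A _
      constructor
      · rintro ⟨-, h⟩; exact h
      · intro h; omega
    have hf1 : smalls.filter (fun (A : Submodule (ZMod 2) (Fin v → ZMod 2)) => ¬ finrank (ZMod 2) ↥A = 2)
        = P.filter (fun (A : Submodule (ZMod 2) (Fin v → ZMod 2)) => finrank (ZMod 2) ↥A = 1) := by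
      rw [hsmalls, Finset.filter_filter]
      apply Finset.filter_congr
      intro A hA
      have h1 := hrank1 A hA
      omega
    have e2 : ∑ A ∈ P.filter (fun (A : Submodule (ZMod 2) (Fin v → ZMod 2)) => finrank (ZMod 2) ↥A = 2), cnt A 0 = 3 := by
      have hcong : ∀ A ∈ P.filter (fun (A : Submodule (ZMod 2) (Fin v → ZMod 2)) => finrank (ZMod 2) ↥A = 2), cnt A 0 = 3 := by
        intro A hA
        rw [cnt_zero, (Finset.mem_filter.mp hA).2]
        norm_num
      rw [Finset.sum_congr rfl hcong, Finset.sum_const, h2, one_smul]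
      
    have e1 : ∑ A ∈ P.filter (fun (A : Submodule (ZMod 2) (Fin v → ZMod 2)) => finrank (ZMod 2) ↥A = 1), cnt A 0 = 5 := by
      have hcong : ∀ A ∈ P.filter (fun (A : Submodule (ZMod 2) (Fin v → ZMod 2)) => finrank (ZMod 2) ↥A = 1), cnt A 0 = 1 := by
        intro A hA
        rw [cnt_zero, (Finset.mem_filter.mp hA).2]
        norm_num
      rw [Finset.sum_congr rfl hcong, Finset.sum_const, h5, smul_eq_mul, mul_one]
    rw [← hsplit2, hf2, hf1, e2, e1]
  -- split of global sums
  have hPsum : ∀ w : (Fin v → ZMod 2), ∑ A ∈ bigs, cnt A w + ∑ A ∈ smalls, cnt A w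
      = ∑ A ∈ P, cnt A w := fun w =>
    Finset.sum_filter_add_sum_filter_not P (fun (A : Submodule (ZMod 2) (Fin v → ZMod 2)) => 2 < finrank (ZMod 2) ↥A) (fun (A : Submodule (ZMod 2) (Fin v → ZMod 2)) => cnt A w)
  -- cast of the big sum
  have hbigsum : ∀ w : (Fin v → ZMod 2), ((∑ A ∈ bigs, cnt A w : ℕ) : ZMod 4) = 3 * (N : ZMod 4) := by
    intro w
    rw [Nat.cast_sum]
    have hcong : ∀ A ∈ bigs, ((cnt A w : ℕ) : ZMod 4) = 3 := by
      intro A hA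
      have h3 : 2 < finrank (ZMod 2) ↥A := (Finset.mem_filter.mp hA).2
      exact cnt_big A w (by omega)
    rw [Finset.sum_congr rfl hcong, Finset.sum_const, nsmul_eq_mul, mul_comm]
  -- Equation 1 (w = 0)
  have hE1 : (3 : ZMod 4) * (N : ZMod 4) = 3 := by
    have h := hPsum 0
    rw [global_count P hpart 0, top_count0] at h
    have hcast := congrArg (fun n : ℕ => (n : ZMod 4)) h
    simp only [Nat.cast_add] at hcast
    rw [hbigsum 0, hc0, cast4 (by omega : 2 ≤ v)] at hcast
    have h8 : ((8 : ℕ) : ZMod 4) = 0 := by decide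
    rw [h8, add_zero] at hcast
    exact hcast
  -- Equation 2 (w ≠ 0): c w ≡ 0 mod 4
  have hE2 : ∀ w : (Fin v → ZMod 2), 4 ∣ ∑ A ∈ smalls, cnt A w := by
    intro w
    by_cases hw : w = 0
    · rw [hw, hc0]; norm_num
    · have h := hPsum w
      rw [global_count P hpart w, top_countw w hw (by omega)] at h
      have hcast := congrArg (fun n : ℕ => (n : ZMod 4)) h
      simp only [Nat.cast_add] at hcast
      rw [hbigsum w, cast4 (by omega : 2 ≤ v - 1), hE1] at hcast
      have hz : ((∑ A ∈ smalls, cnt A w : ℕ) : ZMod 4) = 0 := by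
        have h30 : (3 : ZMod 4) + ((∑ A ∈ smalls, cnt A w : ℕ) : ZMod 4) = 3 + 0 := by
          rw [add_zero]
          exact hcast
        exact add_left_cancel h30
      exact (ZMod.natCast_eq_zero_iff _ 4).mp hz
  -- c w ≤ 8
  have hcle : ∀ w : (Fin v → ZMod 2), ∑ A ∈ smalls, cnt A w ≤ 8 := by
    intro w
    calc ∑ A ∈ smalls, cnt A w ≤ ∑ A ∈ smalls, cnt A 0 :=
          Finset.sum_le_sum (fun A _ => cnt_le A w)
      _ = 8 := hc0
  -- the supertail T
  set T := univ.filter (fun x => (∃ A ∈ smalls, x ∈ A) ∧ x ≠ 0) with hT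
  have hTfil : ∀ w : (Fin v → ZMod 2), (T.filter (fun x => w ⬝ᵥ x = 0)).card = ∑ A ∈ smalls, cnt A w := by
    intro w
    have heq : T.filter (fun x => w ⬝ᵥ x = 0)
        = univ.filter (fun x => (∃ A ∈ smalls, x ∈ A) ∧ w ⬝ᵥ x = 0 ∧ x ≠ 0) := by
      rw [hT, Finset.filter_filter]
      apply Finset.filter_congr
      intro x _
      tauto
    rw [heq]
    exact sum_cnt P smalls (Finset.filter_subset _ _) hpart w
  have hTcard : T.card = 8 := by
    have heq : T = T.filter (fun x => (0 : (Fin v → ZMod 2)) ⬝ᵥ x = 0) := by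
      rw [Finset.filter_true_of_mem]
      intro x _
      exact zero_dotProduct x
    rw [heq, hTfil 0, hc0]
  -- main case split
  by_cases hex0 : ∃ w : (Fin v → ZMod 2), (T.filter (fun x => w ⬝ᵥ x = 0)).card = 0
  · -- a hyperplane avoiding T : contradiction with the line
    obtain ⟨w, hw⟩ := hex0
    have hwT : ∀ t ∈ T, w ⬝ᵥ t ≠ 0 := by
      intro t ht hwt
      rw [Finset.card_eq_zero] at hw
      have : t ∈ T.filter (fun x => w ⬝ᵥ x = 0) := Finset.mem_filter.mpr ⟨ht, hwt⟩
      rw [hw] at this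
      exact absurd this (Finset.notMem_empty t)
    obtain ⟨L, hL⟩ := Finset.card_eq_one.mp h2
    have hLmem : L ∈ P.filter (fun (A : Submodule (ZMod 2) (Fin v → ZMod 2)) => finrank (ZMod 2) ↥A = 2) := by
      rw [hL]; exact Finset.mem_singleton_self L
    have hLP : L ∈ P := (Finset.mem_filter.mp hLmem).1
    have hL2 : finrank (ZMod 2) ↥L = 2 := (Finset.mem_filter.mp hLmem).2
    have hnzL : (univ.filter (fun x => x ∈ L ∧ x ≠ 0)).card = 3 := by
      have h := cnt_zero L
      rw [hL2] at h
      have heq : univ.filter (fun x => x ∈ L ∧ x ≠ 0)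
          = univ.filter (fun x => x ∈ L ∧ (0 : (Fin v → ZMod 2)) ⬝ᵥ x = 0 ∧ x ≠ 0) := by
        apply Finset.filter_congr
        intro x _
        simp [zero_dotProduct]
      rw [heq]
      exact h
    have h13 : 1 < (univ.filter (fun x => x ∈ L ∧ x ≠ 0)).card := by omega
    obtain ⟨a, ha, b, hb, hab⟩ := Finset.one_lt_card.mp h13
    simp only [Finset.mem_filter, Finset.mem_univ, true_and] at ha hb
    have habL : a + b ∈ L := L.add_mem ha.1 hb.1
    have hab0 : a + b ≠ 0 := by
      intro h
      apply hab
      have h' : a + b = a + a := by rw [h, addself]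
      exact (add_left_cancel h').symm
    have hLsm : L ∈ smalls := by
      rw [hsmalls]
      exact Finset.mem_filter.mpr ⟨hLP, by rw [hL2]; omega⟩
    have hmemT : ∀ x, x ∈ L → x ≠ 0 → x ∈ T := by
      intro x hxL hx0
      rw [hT]
      exact Finset.mem_filter.mpr ⟨Finset.mem_univ x, ⟨L, hLsm, hxL⟩, hx0⟩
    have ha1 := two_ne0 (hwT a (hmemT a ha.1 ha.2))
    have hb1 := two_ne0 (hwT b (hmemT b hb.1 hb.2))
    have hab1 := hwT (a + b) (hmemT _ habL hab0)
    apply hab1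
    rw [dotProduct_add, ha1, hb1]
    decide
  · -- character sum contradiction
    push_neg at hex0
    have hge4 : ∀ w : (Fin v → ZMod 2), 4 ≤ ∑ A ∈ smalls, cnt A w := by
      intro w
      have h1 := hE2 w
      have h2' := hcle w
      have h3 := hex0 w
      rw [hTfil w] at h3
      omega
    have hzero : ∑ w : (Fin v → ZMod 2), ∑ t ∈ T, chi (w ⬝ᵥ t) = 0 := by
      rw [Finset.sum_comm]
      apply Finset.sum_eq_zero
      intro t ht
      have ht0 : t ≠ 0 := by
        rw [hT] at ht
        exact (Finset.mem_filter.mp ht).2.2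
      obtain ⟨i, hi⟩ := Function.ne_iff.mp ht0
      have hi' : t i ≠ 0 := by simpa using hi
      have hw0t : (Pi.single i 1 : (Fin v → ZMod 2)) ⬝ᵥ t = 1 := by
        rw [single_dotProduct, one_mul]
        exact two_ne0 hi'
      have hrev : ∑ w : (Fin v → ZMod 2), chi ((w + Pi.single i 1) ⬝ᵥ t) = ∑ w : (Fin v → ZMod 2), chi (w ⬝ᵥ t) :=
        Fintype.sum_equiv (Equiv.addRight (Pi.single i 1 : (Fin v → ZMod 2))) _ _ (fun w => rfl)
      have hneg : ∀ w : (Fin v → ZMod 2), chi ((w + Pi.single i 1) ⬝ᵥ t) = - chi (w ⬝ᵥ t) := by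
        intro w
        rw [add_dotProduct, hw0t]
        generalize w ⬝ᵥ t = x
        revert x
        decide
      rw [Finset.sum_congr rfl (fun w _ => hneg w), Finset.sum_neg_distrib] at hrev
      linarith
    have hval : ∀ w : (Fin v → ZMod 2), ∑ t ∈ T, chi (w ⬝ᵥ t)
        = 2 * ((∑ A ∈ smalls, cnt A w : ℕ) : ℤ) - 8 := by
      intro w
      have hsp := Finset.sum_filter_add_sum_filter_not T (fun t => w ⬝ᵥ t = 0)
        (fun t => chi (w ⬝ᵥ t))
      have e1 : ∑ t ∈ T.filter (fun t => w ⬝ᵥ t = 0), chi (w ⬝ᵥ t)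
          = ((T.filter (fun t => w ⬝ᵥ t = 0)).card : ℤ) := by
        have hcong : ∀ t ∈ T.filter (fun t => w ⬝ᵥ t = 0), chi (w ⬝ᵥ t) = 1 := by
          intro t ht
          have := (Finset.mem_filter.mp ht).2
          simp [chi, this]
        rw [Finset.sum_congr rfl hcong, Finset.sum_const, nsmul_eq_mul, mul_one]
      have e2 : ∑ t ∈ T.filter (fun t => ¬ w ⬝ᵥ t = 0), chi (w ⬝ᵥ t)
          = -(((T.filter (fun t => ¬ w ⬝ᵥ t = 0)).card : ℤ)) := by
        have hcong : ∀ t ∈ T.filter (fun t => ¬ w ⬝ᵥ t = 0), chi (w ⬝ᵥ t) = -1 := by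
          intro t ht
          have := (Finset.mem_filter.mp ht).2
          simp [chi, this]
        rw [Finset.sum_congr rfl hcong, Finset.sum_const, nsmul_eq_mul, mul_neg_one]
      have hcards := Finset.card_filter_add_card_filter_not
        (s := T) (p := fun t => w ⬝ᵥ t = 0)
      rw [e1, e2] at hsp
      rw [hTfil w] at hcards hsp
      rw [hTcard] at hcards
      have hle := hcle w
      rw [← hsp]
      have hnot : ((T.filter (fun t => ¬ w ⬝ᵥ t = 0)).card : ℤ)
          = 8 - ((∑ A ∈ smalls, cnt A w : ℕ) : ℤ) := by
        have : (T.filter (fun t => ¬ w ⬝ᵥ t = 0)).card = 8 - ∑ A ∈ smalls, cnt A w := by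
          omega
        rw [this]
        push_cast [Nat.cast_sub hle]
        ring
      rw [hnot]
      ring
    rw [Finset.sum_congr rfl (fun w _ => hval w)] at hzero
    have hnn : ∀ w ∈ (univ : Finset (Fin v → ZMod 2)),
        (0 : ℤ) ≤ 2 * ((∑ A ∈ smalls, cnt A w : ℕ) : ℤ) - 8 := by
      intro w _
      have := hge4 w
      have hcast : (4 : ℤ) ≤ ((∑ A ∈ smalls, cnt A w : ℕ) : ℤ) := by exact_mod_cast this
      linarith
    have hall := (Finset.sum_eq_zero_iff_of_nonneg hnn).mp hzero
    have h00 := hall 0 (Finset.mem_univ 0)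
    rw [hc0] at h00
    norm_num at h00

end NS

/-- No vector space partition of PG(v-1,2) with an element of dimension at
least 3 has a supertail of type 2^1 1^5. -/
theorem no_supertail_2_1_1_5 (v : ℕ)
    (P : Finset (Submodule (ZMod 2) (Fin v → ZMod 2)))
    (hbot : ∀ A ∈ P, A ≠ ⊥)
    (hpart : ∀ x : Fin v → ZMod 2, x ≠ 0 → ∃! A, A ∈ P ∧ x ∈ A)
    (hex : ∃ A ∈ P, 3 ≤ finrank (ZMod 2) ↥A) :
    ¬ ((P.filter (fun (A : Submodule (ZMod 2) (Fin v → ZMod 2)) => finrank (ZMod 2) ↥A = 2)).card = 1 ∧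
       (P.filter (fun (A : Submodule (ZMod 2) (Fin v → ZMod 2)) => finrank (ZMod 2) ↥A = 1)).card = 5) := by
  rintro ⟨h2, h5⟩
  exact NS.main v P hbot hpart hex h2 h5
end

section
/- Let K_1, K_2, K_3 be three pairwise disjoint k-dimensional subspaces of F_2^v (k ≥ 3), let L be the set of lines meeting each K_i in exactly one point, and for each i let P_i = {L ∩ K_i : L ∈ L}. Then for each i, the set of points P_i together with 0 is closed under addition, i.e., P_i ∪ {0} forms a subspace of K_i. -/
/-!
The points in question are the nonzero points of `K i ⊓ (K j ⊔ K l)`, where `{i, j, l}` is all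
of `Fin 3`. A transversal line `W` is spanned by its two (independent) points on `K j` and `K l`,
so `W ≤ K j ⊔ K l`; conversely, a nonzero `x = b + c` with `b ∈ K j`, `c ∈ K l` lies on the
transversal line spanned by `b` and `c`.
-/

open Function Module Submodule

theorem Submodule.notMem_of_disjoint {R M : Type*} [Semiring R] [AddCommMonoid M] [Module R M]
    {A B : Submodule R M} (hAB : Disjoint A B) {x : M} (hx : x ∈ A) (hx0 : x ≠ 0) : x ∉ B :=
  fun hxB => hx0 (disjoint_def.mp hAB x hx hxB)

variable {F V : Type*} [DivisionRing F] [AddCommGroup V] [Module F V]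

theorem Submodule.finrank_inf_eq_one_of_notMem {W P : Submodule F V} (hW : finrank F W = 2)
    {x y : V} (hx : x ∈ W ⊓ P) (hx0 : x ≠ 0) (hy : y ∈ W) (hyP : y ∉ P) :
    finrank F ↥(W ⊓ P) = 1 := by
  have : FiniteDimensional F W := Module.finite_of_finrank_pos (by omega)
  have hpos : 1 ≤ finrank F ↥(W ⊓ P) :=
    one_le_finrank_iff.mpr ((Submodule.ne_bot_iff _).mpr ⟨x, hx, hx0⟩)
  have hlt : finrank F ↥(W ⊓ P) < finrank F W :=
    finrank_lt_finrank_of_lt (lt_of_le_of_ne inf_le_left fun h => hyP (h ▸ hy).2)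
  omega

theorem Submodule.finrank_sup_eq_two {A B : Submodule F V} (hAB : Disjoint A B)
    (hA : finrank F A = 1) (hB : finrank F B = 1) : finrank F ↥(A ⊔ B) = 2 := by
  have : FiniteDimensional F A := Module.finite_of_finrank_pos (by omega)
  have : FiniteDimensional F B := Module.finite_of_finrank_pos (by omega)
  have := finrank_sup_add_finrank_inf_eq A B
  rw [disjoint_iff.mp hAB, finrank_bot] at this
  omega

theorem Submodule.le_sup_of_finrank_inf_eq_one {W A B : Submodule F V} (hAB : Disjoint A B)
    (hW : finrank F W = 2) (hA : finrank F ↥(W ⊓ A) = 1) (hB : finrank F ↥(W ⊓ B) = 1) :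
    W ≤ A ⊔ B := by
  have : FiniteDimensional F W := Module.finite_of_finrank_pos (by omega)
  have hWAB : (W ⊓ A) ⊔ (W ⊓ B) = W :=
    eq_of_le_of_finrank_eq (sup_le inf_le_left inf_le_left) <| by
      rw [hW, finrank_sup_eq_two (hAB.mono inf_le_right inf_le_right) hA hB]
  exact hWAB ▸ sup_le_sup inf_le_right inf_le_right

theorem Submodule.finrank_span_pair_of_disjoint {A B : Submodule F V} (hAB : Disjoint A B)
    {b c : V} (hb : b ∈ A) (hc : c ∈ B) (hb0 : b ≠ 0) (hc0 : c ≠ 0) :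
    finrank F (span F {b, c}) = 2 := by
  rw [span_insert]
  refine finrank_sup_eq_two ?_ (finrank_span_singleton hb0) (finrank_span_singleton hc0)
  exact hAB.mono ((span_singleton_le_iff_mem _ _).mpr hb) ((span_singleton_le_iff_mem _ _).mpr hc)

def IsTransversal {ι : Type*} (K : ι → Submodule F V) (W : Submodule F V) : Prop :=
  finrank F W = 2 ∧ ∀ i, finrank F ↥(W ⊓ K i) = 1

theorem IsTransversal.le_sup {ι : Type*} {K : ι → Submodule F V} (hK : Pairwise (Disjoint on K))
    {W : Submodule F V} (hW : IsTransversal K W) {j l : ι} (hjl : j ≠ l) : W ≤ K j ⊔ K l :=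
  le_sup_of_finrank_inf_eq_one (hK hjl) hW.1 (hW.2 j) (hW.2 l)

section ThreeSubspaces

variable {K : Fin 3 → Submodule F V} {i j l : Fin 3}

theorem isTransversal_span_pair (hK : Pairwise (Disjoint on K)) (hij : i ≠ j) (hil : i ≠ l)
    (hjl : j ≠ l) {b c : V} (hb : b ∈ K j) (hc : c ∈ K l) (hb0 : b ≠ 0)
    (hc0 : c ≠ 0) (hbc : b + c ∈ K i) : IsTransversal K (span F {b, c}) := by
  have hW := finrank_span_pair_of_disjoint (hK hjl) hb hc hb0 hc0
  have hbW : b ∈ span F {b, c} := subset_span (by simp)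
  have hcW : c ∈ span F {b, c} := subset_span (by simp)
  have hbc0 : b + c ≠ 0 := fun h =>
    notMem_of_disjoint (hK hjl) hb hb0 (eq_neg_of_add_eq_zero_left h ▸ neg_mem hc)
  refine ⟨hW, fun m => ?_⟩
  obtain rfl | rfl | rfl : m = i ∨ m = j ∨ m = l := by omega
  · exact finrank_inf_eq_one_of_notMem hW ⟨add_mem hbW hcW, hbc⟩ hbc0 hbW
      (notMem_of_disjoint (hK hij.symm) hb hb0)
  · exact finrank_inf_eq_one_of_notMem hW ⟨hbW, hb⟩ hb0 hcW
      (notMem_of_disjoint (hK hjl.symm) hc hc0)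
  · exact finrank_inf_eq_one_of_notMem hW ⟨hcW, hc⟩ hc0 hbW
      (notMem_of_disjoint (hK hjl) hb hb0)

theorem exists_isTransversal_mem_iff (hK : Pairwise (Disjoint on K)) (hij : i ≠ j)
    (hil : i ≠ l) (hjl : j ≠ l) {x : V} (hx0 : x ≠ 0) :
    (x ∈ K i ∧ ∃ W, IsTransversal K W ∧ x ∈ W) ↔ x ∈ K i ⊓ (K j ⊔ K l) := by
  refine ⟨fun ⟨hx, W, hW, hxW⟩ => ⟨hx, hW.le_sup hK hjl hxW⟩, fun ⟨hx, hxjl⟩ => ⟨hx, ?_⟩⟩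
  obtain ⟨b, hb, c, hc, rfl⟩ := mem_sup.mp hxjl
  have hb0 : b ≠ 0 := by
    rintro rfl
    rw [zero_add] at hx hx0
    exact notMem_of_disjoint (hK hil) hx hx0 hc
  have hc0 : c ≠ 0 := by
    rintro rfl
    rw [add_zero] at hx hx0
    exact notMem_of_disjoint (hK hij) hx hx0 hb
  exact ⟨_, isTransversal_span_pair hK hij hil hjl hb hc hb0 hc0 hx,
    add_mem (subset_span (by simp)) (subset_span (by simp))⟩

end ThreeSubspaces

theorem transversal_points_form_subspace_general (v : ℕ)
    (K : Fin 3 → Submodule (ZMod 2) (Fin v → ZMod 2))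
    (hdisj : ∀ i j, i ≠ j → K i ⊓ K j = ⊥)
    (L : Set (Submodule (ZMod 2) (Fin v → ZMod 2)))
    (hL : L = {W : Submodule (ZMod 2) (Fin v → ZMod 2) | finrank (ZMod 2) ↥W = 2 ∧
      ∀ i, finrank (ZMod 2) ↥(W ⊓ K i) = 1}) :
    ∀ i, ∃ S : Submodule (ZMod 2) (Fin v → ZMod 2), S ≤ K i ∧
      (S : Set (Fin v → ZMod 2)) =
        {x | x ≠ 0 ∧ x ∈ K i ∧ ∃ W ∈ L, x ∈ W} ∪ {0} := by
  intro i
  obtain ⟨j, l, hij, hil, hjl⟩ : ∃ j l, i ≠ j ∧ i ≠ l ∧ j ≠ l := by revert i; decide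
  have hK : Pairwise (Disjoint on K) := fun i j h => disjoint_iff.mpr (hdisj i j h)
  refine ⟨K i ⊓ (K j ⊔ K l), inf_le_left, Set.ext fun x => ?_⟩
  rcases eq_or_ne x 0 with rfl | hx0
  · simp
  · rw [SetLike.mem_coe, ← exists_isTransversal_mem_iff hK hij hil hjl hx0, hL]
    simp [hx0, IsTransversal]

/-- For three pairwise disjoint k-spaces K₁, K₂, K₃ (k ≥ 3) in F_2^v and the
set L of lines meeting each Kᵢ in exactly one point, the intersection points
{L ∩ Kᵢ : L ∈ L} together with 0 form a subspace of Kᵢ. -/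
theorem transversal_points_form_subspace (v k : ℕ) (hk : 3 ≤ k)
    (K : Fin 3 → Submodule (ZMod 2) (Fin v → ZMod 2))
    (hdim : ∀ i, finrank (ZMod 2) ↥(K i) = k)
    (hdisj : ∀ i j, i ≠ j → K i ⊓ K j = ⊥)
    (L : Set (Submodule (ZMod 2) (Fin v → ZMod 2)))
    (hL : L = {W : Submodule (ZMod 2) (Fin v → ZMod 2) | finrank (ZMod 2) ↥W = 2 ∧
      ∀ i, finrank (ZMod 2) ↥(W ⊓ K i) = 1}) :
    ∀ i, ∃ S : Submodule (ZMod 2) (Fin v → ZMod 2), S ≤ K i ∧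
      (S : Set (Fin v → ZMod 2)) =
        {x | x ≠ 0 ∧ x ∈ K i ∧ ∃ W ∈ L, x ∈ W} ∪ {0} :=
  transversal_points_form_subspace_general v K hdisj L hL
end

section
/- Suppose H is an 8-divisible set of 60 points spanning PG(k-1,2), and every hyperplane contains a number of points of H congruent to 4 modulo 8 (i.e., the spectrum is supported on multiplicities 4 + 8i). Then k ≥ 8, and if k = 8 the spectrum is uniquely determined: a_36 = 60, a_28 = 195, and a_i = 0 otherwise. -/
/-!
Double counting pairs (point, hyperplane) and triples (point, point, hyperplane) gives the first
two moments of the hyperplane multiplicities `n φ = #(S ∩ ker φ)` over all `2 ^ k` functionals: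
`∑ n φ = 30 * 2 ^ k` and `∑ n φ ^ 2 = 915 * 2 ^ k`. Hence `∑ (n φ - 28) * (n φ - 36) = 3 * 2 ^ k`.
The term `φ = 0` contributes `32 * 24 = 768`, and every other term is nonnegative since no
`n ≡ 4 (mod 8)` lies strictly between 28 and 36. So `2 ^ k ≥ 256`, and for `k = 8` every other
term vanishes: each `n φ` with `φ ≠ 0` is 28 or 36, and the first moment fixes how many of each.
-/

open Classical Module

open Finset

section DoubleCounting

variable {R M : Type*} [CommSemiring R] [AddCommMonoid M] [Module R M] [DecidableEq R]

/-- The multiplicity of the hyperplane `ker φ` in the point set `S`. -/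
def kerCount (S : Finset M) (φ : Dual R M) : ℕ := #{x ∈ S | φ x = 0}

theorem kerCount_zero (S : Finset M) : kerCount S (0 : Dual R M) = #S := by
  simp [kerCount]

variable [Fintype (Dual R M)]

theorem sum_kerCount (S : Finset M) :
    ∑ φ : Dual R M, kerCount S φ = ∑ x ∈ S, #{φ : Dual R M | φ x = 0} := by
  simp only [kerCount, card_filter]
  exact sum_comm

theorem sum_kerCount_sq (S : Finset M) :
    ∑ φ : Dual R M, kerCount S φ ^ 2
      = ∑ x ∈ S, ∑ y ∈ S, #{φ : Dual R M | φ x = 0 ∧ φ y = 0} := by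
  simp only [kerCount, card_filter, sq, sum_mul_sum, ite_zero_mul_ite_zero, mul_one]
  rw [sum_comm]
  exact sum_congr rfl fun x _ => sum_comm

end DoubleCounting

section FiniteField

variable {F V : Type*} [Field F] [AddCommGroup V] [Module F V] [FiniteDimensional F V]

theorem Subspace.natCard_dualAnnihilator_mul (W : Subspace F V) :
    Nat.card W.dualAnnihilator * Nat.card F ^ finrank F W = Nat.card F ^ finrank F V := by
  rw [natCard_eq_pow_finrank (K := F), ← pow_add, add_comm,
    Subspace.finrank_add_finrank_dualAnnihilator_eq]

variable [Fintype (Dual F V)]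

theorem card_dual_eq_pow_finrank : Fintype.card (Dual F V) = Nat.card F ^ finrank F V := by
  rw [← Nat.card_eq_fintype_card, natCard_eq_pow_finrank (K := F), Subspace.dual_finrank_eq]

variable [DecidableEq F]

theorem card_filter_forall_apply_eq_zero_mul {ι : Type*} [Fintype ι] {v : ι → V}
    (hv : LinearIndependent F v) :
    #{φ : Dual F V | ∀ i, φ (v i) = 0} * Nat.card F ^ Fintype.card ι
      = Nat.card F ^ finrank F V := by
  have hann : #{φ : Dual F V | ∀ i, φ (v i) = 0}
      = Nat.card (Submodule.span F (Set.range v)).dualAnnihilator := by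
    rw [← Fintype.card_subtype, ← Nat.card_eq_fintype_card]
    refine Nat.card_congr (Equiv.subtypeEquivRight fun φ => ?_)
    rw [← SetLike.mem_coe, Submodule.coe_dualAnnihilator_span]
    simp [Set.range_subset_iff]
  rw [hann, ← finrank_span_eq_card hv, Subspace.natCard_dualAnnihilator_mul]

theorem card_filter_apply_eq_zero_mul {x : V} (hx : x ≠ 0) :
    #{φ : Dual F V | φ x = 0} * Nat.card F = Nat.card F ^ finrank F V := by
  simpa using card_filter_forall_apply_eq_zero_mul
    (linearIndependent_unique_iff.2 (by simpa) : LinearIndependent F ![x])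

theorem card_filter_apply_eq_zero_and_mul {x y : V} (hxy : LinearIndependent F ![x, y]) :
    #{φ : Dual F V | φ x = 0 ∧ φ y = 0} * Nat.card F ^ 2 = Nat.card F ^ finrank F V := by
  simpa [Fin.forall_fin_two] using card_filter_forall_apply_eq_zero_mul hxy

theorem sum_kerCount_mul {S : Finset V} (h0 : ∀ x ∈ S, x ≠ 0) :
    (∑ φ : Dual F V, kerCount S φ) * Nat.card F = #S * Nat.card F ^ finrank F V := by
  rw [sum_kerCount, sum_mul, sum_congr rfl fun x hx => card_filter_apply_eq_zero_mul (h0 x hx),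
    sum_const, smul_eq_mul]

theorem sum_kerCount_sq_mul {S : Finset V} (h0 : ∀ x ∈ S, x ≠ 0)
    (hS : (S : Set V).Pairwise fun x y => LinearIndependent F ![x, y]) :
    (∑ φ : Dual F V, kerCount S φ ^ 2) * Nat.card F ^ 2
      = #S * (Nat.card F + #S - 1) * Nat.card F ^ finrank F V := by
  have hrow : ∀ x ∈ S, (∑ y ∈ S, #{φ : Dual F V | φ x = 0 ∧ φ y = 0}) * Nat.card F ^ 2
      = (Nat.card F + #S - 1) * Nat.card F ^ finrank F V := by
    intro x hx
    have hdiag : #{φ : Dual F V | φ x = 0 ∧ φ x = 0} * Nat.card F ^ 2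
        = Nat.card F * Nat.card F ^ finrank F V := by
      rw [← card_filter_apply_eq_zero_mul (h0 x hx)]
      simp only [and_self]
      ring
    have hoff : ∀ y ∈ S.erase x, #{φ : Dual F V | φ x = 0 ∧ φ y = 0} * Nat.card F ^ 2
        = Nat.card F ^ finrank F V := fun y hy =>
      card_filter_apply_eq_zero_and_mul (hS hx (mem_of_mem_erase hy) (ne_of_mem_erase hy).symm)
    rw [← add_sum_erase S _ hx, add_mul, sum_mul, hdiag, sum_congr rfl hoff, sum_const,
      card_erase_of_mem hx, smul_eq_mul, Nat.add_sub_assoc (card_pos.2 ⟨x, hx⟩)]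
    ring
  rw [sum_kerCount_sq, sum_mul, sum_congr rfl hrow, sum_const, smul_eq_mul, mul_assoc]

end FiniteField

theorem LinearIndependent.pair_zmod_two {V : Type*} [AddCommGroup V] [Module (ZMod 2) V]
    {x y : V} (hx : x ≠ 0) (hy : y ≠ 0) (hxy : x ≠ y) : LinearIndependent (ZMod 2) ![x, y] := by
  have hy2 : y + y = 0 := by rw [← two_smul (ZMod 2), show (2 : ZMod 2) = 0 from rfl, zero_smul]
  have h01 : ∀ c : ZMod 2, c = 0 ∨ c = 1 := by decide
  rw [LinearIndependent.pair_iff]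
  intro s t h
  rcases h01 s with rfl | rfl <;> rcases h01 t with rfl | rfl <;>
    simp only [zero_smul, one_smul, add_zero, zero_add] at h
  · exact ⟨rfl, rfl⟩
  · exact absurd h hy
  · exact absurd h hx
  · exact absurd ((eq_neg_of_add_eq_zero_left h).trans (neg_eq_of_add_eq_zero_right hy2)) hxy

theorem sub_mul_sub_nonneg_of_mod_eight_eq_four {m : ℕ} (hm : m % 8 = 4) :
    0 ≤ ((m : ℤ) - 28) * (m - 36) := by
  rcases (by omega : m ≤ 28 ∨ 36 ≤ m) with h | h
  · exact mul_nonneg_of_nonpos_of_nonpos (by omega) (by omega)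
  · exact mul_nonneg (by omega) (by omega)

namespace SixtyPoints

variable {V : Type*} [AddCommGroup V] [Module (ZMod 2) V] [FiniteDimensional (ZMod 2) V]
  [Fintype (Dual (ZMod 2) V)] {S : Finset V}

theorem sum_kerCount_sub_mul_sub (h0 : ∀ x ∈ S, x ≠ 0) (hcard : #S = 60) :
    ∑ φ : Dual (ZMod 2) V, ((kerCount S φ : ℤ) - 28) * (kerCount S φ - 36)
      = 3 * 2 ^ finrank (ZMod 2) V := by
  have hpair : (S : Set V).Pairwise fun x y => LinearIndependent (ZMod 2) ![x, y] :=
    fun x hx y hy hxy => .pair_zmod_two (h0 x hx) (h0 y hy) hxy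
  have hfirst := sum_kerCount_mul (F := ZMod 2) h0
  have hsecond := sum_kerCount_sq_mul h0 hpair
  simp only [Nat.card_zmod, hcard] at hfirst hsecond
  have hfirst_int : (∑ φ : Dual (ZMod 2) V, (kerCount S φ : ℤ)) * 2
      = 60 * 2 ^ finrank (ZMod 2) V := by
    exact_mod_cast hfirst
  have hsecond_int : (∑ φ : Dual (ZMod 2) V, (kerCount S φ : ℤ) ^ 2) * 4
      = 3660 * 2 ^ finrank (ZMod 2) V := by
    exact_mod_cast hsecond
  have hexpand : ∀ φ : Dual (ZMod 2) V, ((kerCount S φ : ℤ) - 28) * (kerCount S φ - 36)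
      = (kerCount S φ : ℤ) ^ 2 - 64 * kerCount S φ + 1008 := fun φ => by ring
  simp only [hexpand, sum_add_distrib, sum_sub_distrib, ← mul_sum, sum_const, card_univ,
    card_dual_eq_pow_finrank, Nat.card_zmod, nsmul_eq_mul]
  push_cast
  linarith

theorem sum_erase_zero_kerCount_sub_mul_sub [DecidableEq (Dual (ZMod 2) V)]
    (h0 : ∀ x ∈ S, x ≠ 0) (hcard : #S = 60) :
    ∑ φ ∈ univ.erase (0 : Dual (ZMod 2) V), ((kerCount S φ : ℤ) - 28) * (kerCount S φ - 36)
      = 3 * 2 ^ finrank (ZMod 2) V - 768 := by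
  rw [sum_erase_eq_sub (mem_univ _), sum_kerCount_sub_mul_sub h0 hcard, kerCount_zero, hcard]
  norm_num

theorem eight_le_finrank (h0 : ∀ x ∈ S, x ≠ 0) (hcard : #S = 60)
    (hmod : ∀ φ : Dual (ZMod 2) V, φ ≠ 0 → kerCount S φ % 8 = 4) :
    8 ≤ finrank (ZMod 2) V := by
  have hnonneg := sum_nonneg fun φ (hφ : φ ∈ univ.erase 0) =>
    sub_mul_sub_nonneg_of_mod_eight_eq_four (hmod φ (ne_of_mem_erase hφ))
  rw [sum_erase_zero_kerCount_sub_mul_sub h0 hcard] at hnonneg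
  have hpow : 2 ^ 8 ≤ 2 ^ finrank (ZMod 2) V := by
    exact_mod_cast (by linarith : (2 : ℤ) ^ 8 ≤ 2 ^ finrank (ZMod 2) V)
  exact (Nat.pow_le_pow_iff_right (by norm_num)).1 hpow

theorem kerCount_eq_28_or_36 (h0 : ∀ x ∈ S, x ≠ 0) (hcard : #S = 60)
    (hmod : ∀ φ : Dual (ZMod 2) V, φ ≠ 0 → kerCount S φ % 8 = 4)
    (hV : finrank (ZMod 2) V = 8) {φ : Dual (ZMod 2) V} (hφ : φ ≠ 0) :
    kerCount S φ = 28 ∨ kerCount S φ = 36 := by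
  have hsum : ∑ ψ ∈ univ.erase (0 : Dual (ZMod 2) V),
      ((kerCount S ψ : ℤ) - 28) * (kerCount S ψ - 36) = 0 := by
    rw [sum_erase_zero_kerCount_sub_mul_sub h0 hcard, hV]
    norm_num
  have hterm := (sum_eq_zero_iff_of_nonneg fun ψ hψ =>
    sub_mul_sub_nonneg_of_mod_eight_eq_four (hmod ψ (ne_of_mem_erase hψ))).1 hsum φ
      (mem_erase.2 ⟨hφ, mem_univ _⟩)
  rcases mul_eq_zero.1 hterm with h | h <;> omega

theorem card_kerCount_eq_28_and_36 [DecidableEq (Dual (ZMod 2) V)]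
    (h0 : ∀ x ∈ S, x ≠ 0) (hcard : #S = 60)
    (hmod : ∀ φ : Dual (ZMod 2) V, φ ≠ 0 → kerCount S φ % 8 = 4)
    (hV : finrank (ZMod 2) V = 8) :
    #{φ ∈ univ.erase (0 : Dual (ZMod 2) V) | kerCount S φ = 28} = 195 ∧
      #{φ ∈ univ.erase (0 : Dual (ZMod 2) V) | kerCount S φ = 36} = 60 := by
  have hmaps : ∀ φ ∈ univ.erase (0 : Dual (ZMod 2) V), kerCount S φ ∈ ({28, 36} : Finset ℕ) :=
    fun φ hφ => by simpa using kerCount_eq_28_or_36 h0 hcard hmod hV (ne_of_mem_erase hφ)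
  have hcount := card_eq_sum_card_fiberwise hmaps
  have hsum := sum_fiberwise_of_maps_to hmaps (kerCount S)
  rw [sum_pair (by norm_num)] at hcount hsum
  rw [sum_const_nat fun φ hφ => (mem_filter.1 hφ).2,
    sum_const_nat fun φ hφ => (mem_filter.1 hφ).2] at hsum
  have htotal := sum_kerCount_mul (F := ZMod 2) h0
  rw [← add_sum_erase _ _ (mem_univ 0), kerCount_zero] at htotal
  rw [card_erase_of_mem (mem_univ _), card_univ, card_dual_eq_pow_finrank] at hcount
  simp only [Nat.card_zmod, hcard, hV] at htotal hcount
  omega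

end SixtyPoints

theorem spectrum_60_points_general (k : ℕ)
    (S : Finset (Fin k → ZMod 2)) (h0 : ∀ x ∈ S, x ≠ 0)
    (hcard : S.card = 60)
    (hmod : ∀ φ : (Fin k → ZMod 2) →ₗ[ZMod 2] ZMod 2, φ ≠ 0 →
      (S.filter (fun x => φ x = 0)).card % 8 = 4)
    (a : ℕ → ℕ)
    (ha : ∀ j, a j = Set.ncard {φ : (Fin k → ZMod 2) →ₗ[ZMod 2] ZMod 2 |
      φ ≠ 0 ∧ (S.filter (fun x => φ x = 0)).card = j}) :
    8 ≤ k ∧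
    (k = 8 → a 36 = 60 ∧ a 28 = 195 ∧
      ∀ j, j ≠ 36 → j ≠ 28 → a j = 0) := by
  have : Finite (Dual (ZMod 2) (Fin k → ZMod 2)) := Module.finite_of_finite (ZMod 2)
  let := Fintype.ofFinite (Dual (ZMod 2) (Fin k → ZMod 2))
  have hk : finrank (ZMod 2) (Fin k → ZMod 2) = k := finrank_fin_fun _
  have ha_card : ∀ j, a j = #{φ ∈ univ.erase 0 | kerCount S φ = j} := fun j => by
    rw [ha j, Set.ncard_eq_toFinset_card']
    congr 1
    ext φ
    simp only [Set.mem_toFinset, Set.mem_ofPred_eq, mem_filter, mem_erase, mem_univ, and_true]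
    rfl
  refine ⟨hk ▸ SixtyPoints.eight_le_finrank h0 hcard hmod, fun hk8 => ?_⟩
  have hV : finrank (ZMod 2) (Fin k → ZMod 2) = 8 := hk.trans hk8
  obtain ⟨h28, h36⟩ := SixtyPoints.card_kerCount_eq_28_and_36 h0 hcard hmod hV
  refine ⟨(ha_card 36).trans h36, (ha_card 28).trans h28, fun j hj36 hj28 => ?_⟩
  rw [ha_card, card_eq_zero, filter_eq_empty_iff]
  intro φ hφ
  rcases SixtyPoints.kerCount_eq_28_or_36 h0 hcard hmod hV (ne_of_mem_erase hφ) with h | h <;> omega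

/-- An 8-divisible spanning set of 60 points in PG(k-1,2) whose hyperplane
multiplicities are all ≡ 4 (mod 8) forces k ≥ 8; for k = 8 the spectrum is
a_36 = 60, a_28 = 195 and a_i = 0 otherwise. -/
theorem spectrum_60_points (k : ℕ)
    (S : Finset (Fin k → ZMod 2)) (h0 : ∀ x ∈ S, x ≠ 0)
    (hcard : S.card = 60)
    (hspan : Submodule.span (ZMod 2) (S : Set (Fin k → ZMod 2)) = ⊤)
    (hmod : ∀ φ : (Fin k → ZMod 2) →ₗ[ZMod 2] ZMod 2, φ ≠ 0 →
      (S.filter (fun x => φ x = 0)).card % 8 = 4)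
    (a : ℕ → ℕ)
    (ha : ∀ j, a j = Set.ncard {φ : (Fin k → ZMod 2) →ₗ[ZMod 2] ZMod 2 |
      φ ≠ 0 ∧ (S.filter (fun x => φ x = 0)).card = j}) :
    8 ≤ k ∧
    (k = 8 → a 36 = 60 ∧ a 28 = 195 ∧
      ∀ j, j ≠ 36 → j ≠ 28 → a j = 0) :=
  spectrum_60_points_general k S h0 hcard hmod a ha
end

section
/- For any vector space partition of PG(4,q) consisting of m_2 lines and m_1 points with m_2 ≥ 1, writing m_2 = q^3 + q - j and m_1 = 1 + j(q+1), one must have j ≥ q - 1; equivalently, m_1 ≥ q^2, i.e., the number of points not covered by the lines is at least q^2. -/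
open Classical Module

set_option maxHeartbeats 2000000 in
/-- In a vector space partition of PG(4,q) into lines and points with at least
one line, the number of points is at least q². -/
theorem vsp_pg4_points_lower_bound {F : Type} [Field F] [Fintype F] (q : ℕ)
    (hq : q = Fintype.card F)
    (P : Finset (Submodule F (Fin 5 → F)))
    (hdim : ∀ A ∈ P, finrank F ↥A = 1 ∨ finrank F ↥A = 2)
    (hpart : ∀ x : Fin 5 → F, x ≠ 0 → ∃! A, A ∈ P ∧ x ∈ A)
    (hm2 : 1 ≤ (P.filter (fun (A : Submodule F (Fin 5 → F)) => finrank F ↥A = 2)).card) :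
    q ^ 2 ≤ (P.filter (fun (A : Submodule F (Fin 5 → F)) => finrank F ↥A = 1)).card := by
  classical
  by_contra hcon
  push_neg at hcon
  have hq2 : 2 ≤ q := by rw [hq]; exact Fintype.one_lt_card
  have hfive : finrank F (Fin 5 → F) = 5 := Module.finrank_fin_fun F
  set P1 := P.filter (fun (A : Submodule F (Fin 5 → F)) => finrank F ↥A = 1) with hP1def
  set P2 := P.filter (fun (A : Submodule F (Fin 5 → F)) => finrank F ↥A = 2) with hP2def
  set m1 := P1.card with hm1def
  set m2 := P2.card with hm2def
  -- cardinality of the nonzero part of a submodule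
  have hcardNZ : ∀ A : Submodule F (Fin 5 → F),
      ((A : Set (Fin 5 → F)).toFinset.erase 0).card = q ^ (finrank F ↥A) - 1 := by
    intro A
    have hAcard : Fintype.card ↑((A : Set (Fin 5 → F))) = q ^ finrank F ↥A := by
      rw [hq]
      exact (Fintype.card_congr (Equiv.refl _)).trans (card_eq_pow_finrank (K := F) (V := ↥A))
    rw [Finset.card_erase_of_mem (by simp [A.zero_mem]), Set.toFinset_card, hAcard]
  -- members of P intersect trivially
  have hdisj : ∀ A ∈ P, ∀ B ∈ P, A ≠ B → A ⊓ B = ⊥ := by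
    intro A hA B hB hAB
    rw [Submodule.eq_bot_iff]
    intro x hx
    by_contra hx0
    obtain ⟨C, -, hCuniq⟩ := hpart x hx0
    exact hAB ((hCuniq A ⟨hA, hx.1⟩).trans (hCuniq B ⟨hB, hx.2⟩).symm)
  have hdisjF : ∀ (A B : Submodule F (Fin 5 → F)), A ⊓ B = ⊥ →
      Disjoint ((A : Set (Fin 5 → F)).toFinset.erase 0)
        ((B : Set (Fin 5 → F)).toFinset.erase 0) := by
    intro A B hAB
    rw [Finset.disjoint_left]
    intro x hxA hxB
    simp only [Finset.mem_erase, Set.mem_toFinset, SetLike.mem_coe] at hxA hxB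
    have hx : x ∈ A ⊓ B := ⟨hxA.2, hxB.2⟩
    rw [hAB] at hx
    exact hxA.1 hx
  -- global counting
  have hcardU : (Finset.univ.erase (0 : Fin 5 → F)).card = q ^ 5 - 1 := by
    rw [Finset.card_erase_of_mem (Finset.mem_univ 0), Finset.card_univ, Fintype.card_fun,
      Fintype.card_fin, hq]
  have hglobal : ∑ A ∈ P, (q ^ (finrank F ↥A) - 1) = q ^ 5 - 1 := by
    have hbU : P.biUnion (fun A => (A : Set (Fin 5 → F)).toFinset.erase 0)
        = Finset.univ.erase 0 := by
      ext x
      simp only [Finset.mem_biUnion, Finset.mem_erase, Set.mem_toFinset, SetLike.mem_coe,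
        Finset.mem_univ, and_true]
      constructor
      · rintro ⟨A, hA, hx0, hxA⟩; exact hx0
      · intro hx0
        obtain ⟨A, ⟨hA, hxA⟩, -⟩ := hpart x hx0
        exact ⟨A, hA, hx0, hxA⟩
    have hcb := Finset.card_biUnion
      (s := P) (t := fun A => (A : Set (Fin 5 → F)).toFinset.erase 0)
      (fun A hA B hB hAB => hdisjF A B (hdisj A hA B hB hAB))
    rw [hbU, hcardU] at hcb
    calc ∑ A ∈ P, (q ^ (finrank F ↥A) - 1)
        = ∑ A ∈ P, ((A : Set (Fin 5 → F)).toFinset.erase 0).card :=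
          Finset.sum_congr rfl (fun A _ => (hcardNZ A).symm)
      _ = q ^ 5 - 1 := hcb.symm
  -- split the global count
  have hPnot : P.filter (fun (A : Submodule F (Fin 5 → F)) => ¬ finrank F ↥A = 1) = P2 := by
    rw [hP2def]
    ext A
    simp only [Finset.mem_filter, and_congr_right_iff]
    intro hA
    constructor
    · intro h1; exact (hdim A hA).resolve_left h1
    · intro h2; omega
  have hsplit : m1 * (q - 1) + m2 * (q ^ 2 - 1) = q ^ 5 - 1 := by
    rw [← hglobal, ← Finset.sum_filter_add_sum_filter_not P (fun A => finrank F ↥A = 1)]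
    congr 1
    · rw [← hP1def, Finset.sum_congr rfl (fun A hA => by
        rw [(Finset.mem_filter.mp hA).2, pow_one]), Finset.sum_const, smul_eq_mul, hm1def]
    · rw [hPnot, Finset.sum_congr rfl (fun A hA => by
        rw [(Finset.mem_filter.mp (hA)).2]), Finset.sum_const, smul_eq_mul, hm2def]
  -- pass to ℤ
  have h1q : 1 ≤ q := by omega
  have h1q2 : 1 ≤ q ^ 2 := Nat.one_le_pow _ _ (by omega)
  have h1q5 : 1 ≤ q ^ 5 := Nat.one_le_pow _ _ (by omega)
  have hsplitZ : (m1 : ℤ) * ((q : ℤ) - 1) + (m2 : ℤ) * ((q : ℤ) ^ 2 - 1)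
      = (q : ℤ) ^ 5 - 1 := by
    have := congrArg (fun n : ℕ => (n : ℤ)) hsplit
    push_cast [Nat.cast_sub h1q, Nat.cast_sub h1q2, Nat.cast_sub h1q5] at this
    linarith
  have hqZ : (2 : ℤ) ≤ (q : ℤ) := by exact_mod_cast hq2
  -- divisibility: m1 - 1 = (q+1) * (q^3 + q - m2)
  have hkey : ((m1 : ℤ) - 1) = ((q : ℤ) + 1) * ((q : ℤ) ^ 3 + (q : ℤ) - (m2 : ℤ)) := by
    have hcancel : ((q : ℤ) - 1) * ((m1 : ℤ) - 1)
        = ((q : ℤ) - 1) * (((q : ℤ) + 1) * ((q : ℤ) ^ 3 + (q : ℤ) - (m2 : ℤ))) := by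
      linear_combination hsplitZ
    exact mul_left_cancel₀ (by linarith : ((q : ℤ) - 1) ≠ 0) hcancel
  have hm1Z : (m1 : ℤ) ≤ (q : ℤ) ^ 2 - 1 := by
    have : (m1 : ℤ) < (q : ℤ) ^ 2 := by exact_mod_cast hcon
    linarith
  have hm2Z : (q : ℤ) ^ 3 + 2 ≤ (m2 : ℤ) := by
    set k : ℤ := (q : ℤ) ^ 3 + (q : ℤ) - (m2 : ℤ) with hk
    have hm1nonneg : (0 : ℤ) ≤ (m1 : ℤ) := Int.natCast_nonneg m1
    have hkub : k ≤ (q : ℤ) - 2 := by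
      by_contra hc
      push_neg at hc
      have : (q : ℤ) - 1 ≤ k := by omega
      nlinarith
    omega
  have hm2N : q ^ 3 + 2 ≤ m2 := by exact_mod_cast (by push_cast; linarith : ((q ^ 3 + 2 : ℕ) : ℤ) ≤ (m2 : ℤ))
  -- dual setup
  set e : (Fin 5 → F) ≃ₗ[F] Module.Dual F (Fin 5 → F) :=
    (Pi.basisFun F (Fin 5)).toDualEquiv with he
  have hker4 : ∀ a : Fin 5 → F, a ≠ 0 → finrank F ↥(LinearMap.ker (e a)) = 4 := by
    intro a ha
    have hne : e a ≠ 0 := by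
      intro h
      exact ha (by simpa using (e.map_eq_zero_iff).mp h)
    have hrk := LinearMap.finrank_range_add_finrank_ker (e a)
    rw [hfive] at hrk
    have hr1 : finrank F ↥(LinearMap.range (e a)) = 1 := by
      have hle : finrank F ↥(LinearMap.range (e a)) ≤ 1 := by
        have h := Submodule.finrank_le (LinearMap.range (e a))
        simpa [Module.finrank_self] using h
      have hpos : finrank F ↥(LinearMap.range (e a)) ≠ 0 := by
        rw [Ne, Submodule.finrank_eq_zero, LinearMap.range_eq_bot]
        exact hne
      omega
    omega
  -- per-hyperplane bound : at most q lines of P2 inside ker (e a)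
  have hbound : ∀ a : Fin 5 → F, a ≠ 0 →
      (P2.filter (fun A => A ≤ LinearMap.ker (e a))).card ≤ q := by
    intro a ha
    set K := LinearMap.ker (e a) with hKdef
    set b := (P2.filter (fun A => A ≤ K)).card with hbdef
    set b' := (P2.filter (fun A => ¬ A ≤ K)).card with hb'def
    have hbb' : b + b' = m2 := Finset.card_filter_add_card_filter_not _
    have hsum : b * (q ^ 2 - 1) + b' * (q - 1) ≤ q ^ 4 - 1 := by
      have hsub : P2.biUnion (fun A => ((A ⊓ K : Submodule F (Fin 5 → F)) :
          Set (Fin 5 → F)).toFinset.erase 0) ⊆ (K : Set (Fin 5 → F)).toFinset.erase 0 := by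
        intro x hx
        simp only [Finset.mem_biUnion, Finset.mem_erase, Set.mem_toFinset,
          SetLike.mem_coe] at hx ⊢
        obtain ⟨A, hA, hx0, hxA⟩ := hx
        exact ⟨hx0, hxA.2⟩
      have hcardK : ((K : Set (Fin 5 → F)).toFinset.erase 0).card = q ^ 4 - 1 := by
        rw [hcardNZ K, hker4 a ha]
      have hdisj2 : ∀ A ∈ P2, ∀ B ∈ P2, A ≠ B →
          Disjoint (((A ⊓ K : Submodule F (Fin 5 → F)) : Set (Fin 5 → F)).toFinset.erase 0)
            (((B ⊓ K : Submodule F (Fin 5 → F)) : Set (Fin 5 → F)).toFinset.erase 0) := by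
        intro A hA B hB hAB
        apply hdisjF
        have hAB' : A ⊓ B = ⊥ :=
          hdisj A (Finset.mem_filter.mp (hA)).1 B (Finset.mem_filter.mp (hB)).1 hAB
        rw [Submodule.eq_bot_iff]
        intro x hx
        have : x ∈ A ⊓ B := ⟨hx.1.1, hx.2.1⟩
        rw [hAB'] at this
        exact this
      have hcb := Finset.card_biUnion hdisj2
      have hle := Finset.card_le_card hsub
      rw [hcb, hcardK] at hle
      -- lower bound each term
      have hterm : ∀ A ∈ P2, (if A ≤ K then q ^ 2 - 1 else q - 1)
          ≤ (((A ⊓ K : Submodule F (Fin 5 → F)) : Set (Fin 5 → F)).toFinset.erase 0).card := by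
        intro A hA
        have hA2 : finrank F ↥A = 2 := (Finset.mem_filter.mp (hA)).2
        rw [hcardNZ]
        by_cases hAK : A ≤ K
        · rw [if_pos hAK, inf_eq_left.mpr hAK, hA2]
        · rw [if_neg hAK]
          have hfr : 1 ≤ finrank F ↥(A ⊓ K) := by
            have hsup := Submodule.finrank_sup_add_finrank_inf_eq A K
            rw [hA2, hker4 a ha] at hsup
            have hsle := Submodule.finrank_le (A ⊔ K)
            rw [hfive] at hsle
            omega
          have : q ^ 1 ≤ q ^ (finrank F ↥(A ⊓ K)) := Nat.pow_le_pow_right (by omega) hfr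
          rw [pow_one] at this
          omega
      calc b * (q ^ 2 - 1) + b' * (q - 1)
          = ∑ A ∈ P2, (if A ≤ K then q ^ 2 - 1 else q - 1) := by
            rw [Finset.sum_ite, Finset.sum_const, Finset.sum_const, smul_eq_mul, smul_eq_mul,
              hbdef, hb'def]
        _ ≤ ∑ A ∈ P2, (((A ⊓ K : Submodule F (Fin 5 → F)) : Set (Fin 5 → F)).toFinset.erase 0).card :=
            Finset.sum_le_sum hterm
        _ ≤ q ^ 4 - 1 := hle
    -- now derive b ≤ q
    have h1q4 : 1 ≤ q ^ 4 := Nat.one_le_pow _ _ (by omega)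
    have hsumZ : (b : ℤ) * ((q : ℤ) ^ 2 - 1) + (b' : ℤ) * ((q : ℤ) - 1) ≤ (q : ℤ) ^ 4 - 1 := by
      have hcast : ((b * (q ^ 2 - 1) + b' * (q - 1) : ℕ) : ℤ) ≤ ((q ^ 4 - 1 : ℕ) : ℤ) := by
        exact_mod_cast hsum
      push_cast [Nat.cast_sub h1q, Nat.cast_sub h1q2, Nat.cast_sub h1q4] at hcast
      linarith
    have hbb'Z : (b : ℤ) + (b' : ℤ) = (m2 : ℤ) := by exact_mod_cast hbb'
    have h3 : (q : ℤ) * b + (m2 : ℤ) ≤ (q : ℤ) ^ 3 + (q : ℤ) ^ 2 + (q : ℤ) + 1 := by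
      have hfac : ((q : ℤ) - 1) * ((q : ℤ) * b + (m2 : ℤ))
          ≤ ((q : ℤ) - 1) * ((q : ℤ) ^ 3 + (q : ℤ) ^ 2 + (q : ℤ) + 1) := by
        calc ((q : ℤ) - 1) * ((q : ℤ) * b + (m2 : ℤ))
            = (b : ℤ) * ((q : ℤ) ^ 2 - 1) + (b' : ℤ) * ((q : ℤ) - 1) := by
              rw [← hbb'Z]; ring
          _ ≤ (q : ℤ) ^ 4 - 1 := hsumZ
          _ = ((q : ℤ) - 1) * ((q : ℤ) ^ 3 + (q : ℤ) ^ 2 + (q : ℤ) + 1) := by ring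
      exact le_of_mul_le_mul_left hfac (by linarith)
    have hbZ : (b : ℤ) ≤ (q : ℤ) := by
      by_contra hc
      push_neg at hc
      have hb1 : (q : ℤ) + 1 ≤ (b : ℤ) := by omega
      have hmul : (q : ℤ) * ((q : ℤ) + 1) ≤ (q : ℤ) * b :=
        mul_le_mul_of_nonneg_left hb1 (by linarith)
      nlinarith
    exact_mod_cast hbZ
  -- the double count
  set nz : Finset (Fin 5 → F) := Finset.univ.erase 0 with hnzdef
  have hoff : ∀ a : Fin 5 → F, (P2.filter (fun A => A ≤ LinearMap.ker (e a))).offDiag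
      = P2.offDiag.filter (fun p => p.1 ≤ LinearMap.ker (e a) ∧ p.2 ≤ LinearMap.ker (e a)) := by
    intro a
    ext p
    simp only [Finset.mem_offDiag, Finset.mem_filter]
    tauto
  have hswap : ∑ a ∈ nz, (P2.filter (fun A => A ≤ LinearMap.ker (e a))).offDiag.card
      = ∑ p ∈ P2.offDiag, (nz.filter
          (fun a => p.1 ≤ LinearMap.ker (e a) ∧ p.2 ≤ LinearMap.ker (e a))).card := by
    simp_rw [hoff, Finset.card_filter]
    rw [Finset.sum_comm]
  -- per-pair count
  have hpair : ∀ p ∈ P2.offDiag, (nz.filter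
      (fun a => p.1 ≤ LinearMap.ker (e a) ∧ p.2 ≤ LinearMap.ker (e a))).card = q - 1 := by
    rintro ⟨L, L'⟩ hp
    rw [Finset.mem_offDiag] at hp
    obtain ⟨hL, hL', hne⟩ := hp
    have hLP : L ∈ P := (Finset.mem_filter.mp hL).1
    have hL2 : finrank F ↥L = 2 := (Finset.mem_filter.mp hL).2
    have hL'P : L' ∈ P := (Finset.mem_filter.mp hL').1
    have hL'2 : finrank F ↥L' = 2 := (Finset.mem_filter.mp hL').2
    have hinf : L ⊓ L' = ⊥ := hdisj L hLP L' hL'P hne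
    have hW : finrank F ↥(L ⊔ L') = 4 := by
      have hsup := Submodule.finrank_sup_add_finrank_inf_eq L L'
      rw [hinf, hL2, hL'2, finrank_bot] at hsup
      omega
    have hU1 : finrank F ↥(Submodule.comap (e : (Fin 5 → F) →ₗ[F] Module.Dual F (Fin 5 → F))
        (L ⊔ L').dualAnnihilator) = 1 := by
      rw [Submodule.comap_equiv_eq_map_symm e (L ⊔ L').dualAnnihilator]
      rw [LinearEquiv.finrank_map_eq e.symm (L ⊔ L').dualAnnihilator]
      have h1 : finrank F ((Fin 5 → F) ⧸ (L ⊔ L')) = finrank F ↥(L ⊔ L').dualAnnihilator :=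
        (Subspace.quotEquivAnnihilator (L ⊔ L')).finrank_eq
      have h2 := Submodule.finrank_quotient_add_finrank (L ⊔ L')
      rw [hfive, hW] at h2
      omega
    have hset : nz.filter (fun a => L ≤ LinearMap.ker (e a) ∧ L' ≤ LinearMap.ker (e a))
        = (((Submodule.comap (e : (Fin 5 → F) →ₗ[F] Module.Dual F (Fin 5 → F))
            (L ⊔ L').dualAnnihilator : Submodule F (Fin 5 → F)) :
            Set (Fin 5 → F)).toFinset).erase 0 := by
      ext a
      simp only [Finset.mem_filter, hnzdef, Finset.mem_erase, Finset.mem_univ, and_true,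
        Set.mem_toFinset, SetLike.mem_coe, true_and]
      constructor
      · rintro ⟨ha0, hLa, hL'a⟩
        refine ⟨ha0, ?_⟩
        rw [Submodule.mem_comap, Submodule.mem_dualAnnihilator]
        intro w hw
        have hle : L ⊔ L' ≤ LinearMap.ker (e a) := sup_le hLa hL'a
        exact hle hw
      · rintro ⟨ha0, haU⟩
        rw [Submodule.mem_comap, Submodule.mem_dualAnnihilator] at haU
        refine ⟨ha0, ?_, ?_⟩
        · intro x hx
          exact haU x (Submodule.mem_sup_left hx)
        · intro x hx
          exact haU x (Submodule.mem_sup_right hx)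
    rw [hset, hcardNZ _, hU1, pow_one]
  -- upper bound per a
  have hsq : ∀ x : ℕ, x * x - x = x * (x - 1) := by
    intro x
    cases x with
    | zero => rfl
    | succ n => rw [Nat.succ_sub_one, Nat.mul_succ, Nat.add_sub_cancel]
  have hub : ∀ a ∈ nz, (P2.filter (fun A => A ≤ LinearMap.ker (e a))).offDiag.card
      ≤ q * (q - 1) := by
    intro a ha
    have ha0 : a ≠ 0 := (Finset.mem_erase.mp ha).1
    rw [Finset.offDiag_card, hsq]
    exact Nat.mul_le_mul (hbound a ha0) (Nat.sub_le_sub_right (hbound a ha0) 1)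
  -- combine
  have hcount : (m2 * m2 - m2) * (q - 1) ≤ (q ^ 5 - 1) * (q * (q - 1)) := by
    have h1 : ∑ p ∈ P2.offDiag, (nz.filter
        (fun a => p.1 ≤ LinearMap.ker (e a) ∧ p.2 ≤ LinearMap.ker (e a))).card
        = (m2 * m2 - m2) * (q - 1) := by
      rw [Finset.sum_congr rfl hpair, Finset.sum_const, smul_eq_mul, Finset.offDiag_card]
    have h2 : ∑ a ∈ nz, (P2.filter (fun A => A ≤ LinearMap.ker (e a))).offDiag.card
        ≤ (q ^ 5 - 1) * (q * (q - 1)) := by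
      calc ∑ a ∈ nz, (P2.filter (fun A => A ≤ LinearMap.ker (e a))).offDiag.card
          ≤ ∑ _a ∈ nz, q * (q - 1) := Finset.sum_le_sum hub
        _ = (q ^ 5 - 1) * (q * (q - 1)) := by
            rw [Finset.sum_const, smul_eq_mul, hnzdef, hcardU]
    rw [← h1, ← hswap]
    exact h2
  -- final contradiction
  have hm2m : m2 ≤ m2 * m2 := Nat.le_mul_of_pos_left m2 (by omega)
  have hcountZ : ((m2 : ℤ) * m2 - m2) * ((q : ℤ) - 1)
      ≤ ((q : ℤ) ^ 5 - 1) * ((q : ℤ) * ((q : ℤ) - 1)) := by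
    have hcast : (((m2 * m2 - m2) * (q - 1) : ℕ) : ℤ) ≤ (((q ^ 5 - 1) * (q * (q - 1)) : ℕ) : ℤ) := by
      exact_mod_cast hcount
    push_cast [Nat.cast_sub h1q, Nat.cast_sub h1q5, Nat.cast_sub hm2m] at hcast
    nlinarith [hcast]
  have hq1Z : (0 : ℤ) < (q : ℤ) - 1 := by linarith
  have h' : ((m2 : ℤ) * m2 - m2) * ((q : ℤ) - 1)
      ≤ (((q : ℤ) ^ 5 - 1) * (q : ℤ)) * ((q : ℤ) - 1) := by
    calc ((m2 : ℤ) * m2 - m2) * ((q : ℤ) - 1)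
        ≤ ((q : ℤ) ^ 5 - 1) * ((q : ℤ) * ((q : ℤ) - 1)) := hcountZ
      _ = (((q : ℤ) ^ 5 - 1) * (q : ℤ)) * ((q : ℤ) - 1) := by ring
  have hdiv : (m2 : ℤ) * m2 - m2 ≤ ((q : ℤ) ^ 5 - 1) * (q : ℤ) :=
    le_of_mul_le_mul_right h' hq1Z
  have hm2pos : (0 : ℤ) ≤ (q : ℤ) ^ 3 + 1 := by positivity
  have h1 : ((q : ℤ) ^ 3 + 2) * ((q : ℤ) ^ 3 + 1) ≤ (m2 : ℤ) * ((m2 : ℤ) - 1) := by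
    apply mul_le_mul hm2Z (by linarith) hm2pos (by linarith)
  have hq3 : (0 : ℤ) ≤ (q : ℤ) ^ 3 := by positivity
  nlinarith [h1, hdiv, hqZ, hq3]
end
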